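/- arXiv:1912.11560 — 11 statements merged into one kernel-verified Lean document; each statement's English description precedes it below -/
import Mathlib

section
/- For all integers n ≥ 3, k ≥ 1, and t ≥ r ≥ 1, the (t,r) broadcast domination number of the k-th power of the cycle on n vertices is: γ_{t,r}(C_n^{(k)}) = 1 if n ≤ 2(t−r)k + 1; γ_{t,r}(C_n^{(k)}) = 2 if 2(t−r)k + 1 < n ≤ (2t−r−1)k + 1; and γ_{t,r}(C_n^{(k)}) = ⌈n / ((2t−r−1)k + 1)⌉ if n > (2t−r−1)k + 1. -/
/-- Graph distance in the k-th power of the cycle on `n` vertices: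
`d(v_i, v_j) = ⌈min(|i - j|, n - |i - j|) / k⌉`. -/
def cyclePowDist (n k : ℕ) (i j : Fin n) : ℕ :=
  (min (max (i : ℕ) (j : ℕ) - min (i : ℕ) (j : ℕ))
      (n - (max (i : ℕ) (j : ℕ) - min (i : ℕ) (j : ℕ))) + k - 1) / k

/-- A finite set of towers `T` in `C_n^{(k)}` is `(t,r)`-broadcasting if every vertex `v`
receives total signal `∑_{w ∈ T} max (t - d(w,v)) 0 ≥ r`. -/
def IsCycleBroadcasting (n k t r : ℕ) (T : Finset (Fin n)) : Prop :=
  ∀ v : Fin n, r ≤ ∑ w ∈ T, (t - cyclePowDist n k w v)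

/-- `γ_{t,r}(C_n^{(k)})`: the minimum cardinality of a `(t,r)`-broadcasting set of `C_n^{(k)}`. -/
noncomputable def gammaCyclePow (n k t r : ℕ) : ℕ :=
  sInf {m : ℕ | ∃ T : Finset (Fin n), IsCycleBroadcasting n k t r T ∧ T.card = m}

namespace CycleAux

variable {n : ℕ}

/-- add `j` steps clockwise -/
def adda (w : Fin n) (j : ℕ) : Fin n := ⟨(w.val + j) % n, Nat.mod_lt _ w.pos⟩

/-- clockwise distance from `u` to `v` -/
def cw (u v : Fin n) : ℕ := (v.val + n - u.val) % n

lemma adda_val (w : Fin n) (j : ℕ) : (adda w j).val = (w.val + j) % n := rfl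

lemma adda_adda (w : Fin n) (i j : ℕ) : adda (adda w i) j = adda w (i + j) := by
  apply Fin.ext
  simp only [adda_val]
  rw [Nat.mod_add_mod, Nat.add_assoc]

lemma adda_zero (w : Fin n) : adda w 0 = w := by
  apply Fin.ext
  simp only [adda_val, Nat.add_zero, Nat.mod_eq_of_lt w.isLt]

lemma adda_n (w : Fin n) : adda w n = w := by
  apply Fin.ext
  simp only [adda_val, Nat.add_mod_right, Nat.mod_eq_of_lt w.isLt]

lemma cw_lt (u v : Fin n) : cw u v < n := Nat.mod_lt _ u.pos

lemma adda_cw (u v : Fin n) : adda u (cw u v) = v := by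
  apply Fin.ext
  simp only [adda_val, cw]
  rw [Nat.add_mod_mod]
  have hu := u.isLt; have hv := v.isLt
  have h : u.val + (v.val + n - u.val) = v.val + n := by omega
  rw [h, Nat.add_mod_right, Nat.mod_eq_of_lt hv]

lemma cw_adda (u : Fin n) (j : ℕ) : cw u (adda u j) = j % n := by
  simp only [cw, adda_val]
  have hu := u.isLt
  have h1 : (u.val + j) % n + n - u.val = (u.val + j) % n + (n - u.val) := by omega
  rw [h1, Nat.mod_add_mod]
  have h2 : u.val + j + (n - u.val) = j + n := by omega
  rw [h2, Nat.add_mod_right]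

lemma cw_adda_of_lt (u : Fin n) {j : ℕ} (hj : j < n) : cw u (adda u j) = j := by
  rw [cw_adda, Nat.mod_eq_of_lt hj]

lemma cw_self (u : Fin n) : cw u u = 0 := by
  simp only [cw]
  have hu := u.isLt
  have h : u.val + n - u.val = n := by omega
  rw [h, Nat.mod_self]

lemma cw_eq_zero {u v : Fin n} (h : cw u v = 0) : u = v := by
  have h2 := adda_cw u v
  rw [h, adda_zero] at h2
  exact h2

lemma adda_right_cancel {x y : Fin n} {j : ℕ} (h : adda x j = adda y j) : x = y := by
  have hval : (x.val + j) % n = (y.val + j) % n := congrArg Fin.val h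
  have h2 : x.val % n = y.val % n := Nat.ModEq.add_right_cancel' j hval
  apply Fin.ext
  rwa [Nat.mod_eq_of_lt x.isLt, Nat.mod_eq_of_lt y.isLt] at h2

lemma adda_left_cancel {w : Fin n} {i j : ℕ} (hi : i < n) (hj : j < n)
    (h : adda w i = adda w j) : i = j := by
  have hval : (w.val + i) % n = (w.val + j) % n := congrArg Fin.val h
  have h2 : i % n = j % n := Nat.ModEq.add_left_cancel' w.val hval
  rwa [Nat.mod_eq_of_lt hi, Nat.mod_eq_of_lt hj] at h2

lemma cw_add_cw {u v : Fin n} (h : u ≠ v) : cw u v + cw v u = n := by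
  have h1 : adda u (cw u v + cw v u) = u := by
    rw [← adda_adda, adda_cw, adda_cw]
  have h2 : cw u (adda u (cw u v + cw v u)) = (cw u v + cw v u) % n := cw_adda _ _
  rw [h1, cw_self] at h2
  have h3 : n ∣ cw u v + cw v u := Nat.dvd_of_mod_eq_zero h2.symm
  obtain ⟨c, hc⟩ := h3
  have hlt1 := cw_lt u v
  have hlt2 := cw_lt v u
  have hne : cw u v ≠ 0 := fun h0 => h (cw_eq_zero h0)
  rcases c with _ | _ | c
  · omega
  · omega
  · exfalso
    have : n * 2 ≤ n * (c + 1 + 1) := Nat.mul_le_mul_left n (by omega)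
    omega

lemma cw_sub {u v : Fin n} {j : ℕ} (hj : j ≤ cw u v) :
    cw (adda u j) v = cw u v - j := by
  have h1 : adda (adda u j) (cw u v - j) = v := by
    rw [adda_adda]
    have h : j + (cw u v - j) = cw u v := by omega
    rw [h, adda_cw]
  have h2 : cw u v - j < n := lt_of_le_of_lt (Nat.sub_le _ _) (cw_lt u v)
  conv_lhs => rw [← h1]
  rw [cw_adda_of_lt _ h2]

lemma cw_add {u v : Fin n} {j : ℕ} (hj : cw u v + j < n) :
    cw u (adda v j) = cw u v + j := by
  have h1 : adda u (cw u v + j) = adda v j := by rw [← adda_adda, adda_cw]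
  rw [← h1, cw_adda_of_lt _ hj]

lemma adda_mod (w : Fin n) (j : ℕ) : adda w (j % n) = adda w j := by
  apply Fin.ext
  simp only [adda_val, Nat.add_mod_mod]

/-- relation between `cyclePowDist` and clockwise distances -/
lemma dist_eq (k : ℕ) (u v : Fin n) :
    cyclePowDist n k u v = (min (cw u v) (cw v u) + k - 1) / k := by
  have hu := u.isLt; have hv := v.isLt
  unfold cyclePowDist
  congr 2
  rcases Nat.le_total u.val v.val with h | h
  · rcases Nat.eq_or_lt_of_le h with he | hlt
    · have : u = v := Fin.ext he
      subst this
      rw [cw_self]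
      simp
    · have e1 : cw u v = v.val - u.val := by
        simp only [cw]
        have h' : v.val + n - u.val = (v.val - u.val) + n := by omega
        rw [h', Nat.add_mod_right, Nat.mod_eq_of_lt (by omega)]
      have e2 : cw v u = n - (v.val - u.val) := by
        simp only [cw]
        have h' : u.val + n - v.val = n - (v.val - u.val) := by omega
        rw [h', Nat.mod_eq_of_lt (by omega)]
      rw [e1, e2]
      omega
  · rcases Nat.eq_or_lt_of_le h with he | hlt
    · have : v = u := Fin.ext he
      subst this
      rw [cw_self]
      simp
    · have e1 : cw u v = n - (u.val - v.val) := by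
        simp only [cw]
        have h' : v.val + n - u.val = n - (u.val - v.val) := by omega
        rw [h', Nat.mod_eq_of_lt (by omega)]
      have e2 : cw v u = u.val - v.val := by
        simp only [cw]
        have h' : u.val + n - v.val = (u.val - v.val) + n := by omega
        rw [h', Nat.add_mod_right, Nat.mod_eq_of_lt (by omega)]
      rw [e1, e2]
      omega

/-- the signal kernel -/
def phi (k t d : ℕ) : ℕ := t - (d + k - 1) / k

lemma phi_mono {k t d d' : ℕ} (h : d ≤ d') : phi k t d' ≤ phi k t d := by
  unfold phi
  have : (d + k - 1) / k ≤ (d' + k - 1) / k := Nat.div_le_div_right (by omega)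
  omega

lemma tk_eq {t k : ℕ} (ht : 1 ≤ t) : (t - 1) * k + k = t * k := by
  cases t with
  | zero => omega
  | succ t' => simp [Nat.succ_sub_one, Nat.succ_mul]

lemma phi_zero {k t d : ℕ} (hk : 1 ≤ k) (ht : 1 ≤ t) (h : (t - 1) * k + 1 ≤ d) :
    phi k t d = 0 := by
  unfold phi
  have h2 : t ≤ (d + k - 1) / k := by
    rw [Nat.le_div_iff_mul_le (by omega)]
    have := tk_eq (k := k) ht
    omega
  omega

lemma phi_le {k t d : ℕ} : phi k t d ≤ t := Nat.sub_le _ _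

/-- from `r ≤ phi k t d` conclude `d ≤ (t-r)*k` -/
lemma le_of_phi_ge {k t r d : ℕ} (hk : 1 ≤ k) (hr : 1 ≤ r) (h : r ≤ phi k t d) :
    d ≤ (t - r) * k := by
  unfold phi at h
  have hq : (d + k - 1) / k ≤ t - r := by omega
  have h2 : (d + k - 1) / k < (t - r) + 1 := by omega
  rw [Nat.div_lt_iff_lt_mul (by omega)] at h2
  have h3 : ((t - r) + 1) * k = (t - r) * k + k := by ring
  omega

/-- the pair lemma: two towers bracketing a stretch of length ≤ (2t-r-1)k+1 give signal ≥ r -/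
lemma phi_pair {k t r a b : ℕ} (hk : 1 ≤ k) (hr : 1 ≤ r) (htr : r ≤ t)
    (hab : a + b ≤ (2 * t - r - 1) * k + 1) : r ≤ phi k t a + phi k t b := by
  have h1 : (a + k - 1) / k * k ≤ a + k - 1 := Nat.div_mul_le_self _ _
  have h2 : (b + k - 1) / k * k ≤ b + k - 1 := Nat.div_mul_le_self _ _
  have key : (a + k - 1) / k + (b + k - 1) / k ≤ 2 * t - r := by
    by_contra hc
    push_neg at hc
    have h3 : (2 * t - r + 1) * k ≤ ((a + k - 1) / k + (b + k - 1) / k) * k :=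
      Nat.mul_le_mul_right _ hc
    have he : (2 * t - r + 1) = (2 * t - r - 1) + 2 := by omega
    rw [he, Nat.add_mul, Nat.add_mul] at h3
    omega
  unfold phi
  omega


section Towers

variable {n : ℕ} (T : Finset (Fin n))

/-- distance from a tower to the next tower clockwise -/
noncomputable def gnext (w : Fin n) : ℕ := sInf {j | 0 < j ∧ adda w j ∈ T}

variable {T}

lemma gnext_set_nonempty {w : Fin n} (hw : w ∈ T) :
    {j | 0 < j ∧ adda w j ∈ T}.Nonempty :=
  ⟨n, w.pos, by rw [adda_n]; exact hw⟩

lemma gnext_pos_mem {w : Fin n} (hw : w ∈ T) :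
    0 < gnext T w ∧ adda w (gnext T w) ∈ T :=
  Nat.sInf_mem (gnext_set_nonempty hw)

lemma gnext_le {w : Fin n} {j : ℕ} (hj : 0 < j) (hmem : adda w j ∈ T) :
    gnext T w ≤ j := Nat.sInf_le ⟨hj, hmem⟩

lemma gnext_le_n {w : Fin n} (hw : w ∈ T) : gnext T w ≤ n :=
  gnext_le w.pos (by rw [adda_n]; exact hw)

lemma gnext_min {w : Fin n} {j : ℕ} (h1 : 0 < j) (h2 : j < gnext T w) :
    adda w j ∉ T := fun hmem => Nat.notMem_of_lt_sInf h2 ⟨h1, hmem⟩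

/-- if two towers' fibers overlap they agree -/
lemma fib_eq {w1 w2 : Fin n} (hw2 : w2 ∈ T) {j1 j2 : ℕ}
    (h : adda w1 j1 = adda w2 j2) (hle : j2 ≤ j1) (hj1 : j1 < gnext T w1) : w1 = w2 := by
  have h1 : adda (adda w1 (j1 - j2)) j2 = adda w2 j2 := by
    rw [adda_adda]
    have : j1 - j2 + j2 = j1 := by omega
    rw [this, h]
  have h2 : adda w1 (j1 - j2) = w2 := adda_right_cancel h1
  rcases Nat.eq_zero_or_pos (j1 - j2) with h0 | hpos
  · rw [h0, adda_zero] at h2; exact h2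
  · exact absurd (h2 ▸ hw2) (gnext_min hpos (by omega))

lemma sum_gnext (hT : T.Nonempty) : ∑ w ∈ T, gnext T w = n := by
  classical
  have hcover : ∀ v : Fin n, ∃ w ∈ T, cw w v < gnext T w := by
    intro v
    obtain ⟨w, hw, hmin⟩ := T.exists_min_image (fun w => cw w v) hT
    refine ⟨w, hw, ?_⟩
    by_contra hge
    push_neg at hge
    have hz : adda w (gnext T w) ∈ T := (gnext_pos_mem hw).2
    have hpos : 0 < gnext T w := (gnext_pos_mem hw).1
    have hlt : cw (adda w (gnext T w)) v < cw w v := by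
      rw [cw_sub hge]; omega
    exact absurd (hmin _ hz) (not_le.mpr hlt)
  set fib : Fin n → Finset (Fin n) :=
    fun w => (Finset.range (gnext T w)).image (adda w) with hfib
  have hmemfib : ∀ (w : Fin n), w ∈ T → ∀ v, (v ∈ fib w ↔ cw w v < gnext T w) := by
    intro w hw v
    simp only [hfib, Finset.mem_image, Finset.mem_range]
    constructor
    · rintro ⟨j, hj, rfl⟩
      rwa [cw_adda_of_lt _ (lt_of_lt_of_le hj (gnext_le_n hw))]
    · intro h
      exact ⟨cw w v, h, adda_cw w v⟩
  have hdisj : ∀ w1 ∈ T, ∀ w2 ∈ T, w1 ≠ w2 → Disjoint (fib w1) (fib w2) := by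
    intro w1 hw1 w2 hw2 hne
    rw [Finset.disjoint_left]
    intro v hv1 hv2
    simp only [hfib, Finset.mem_image, Finset.mem_range] at hv1 hv2
    obtain ⟨j1, hj1, he1⟩ := hv1
    obtain ⟨j2, hj2, he2⟩ := hv2
    rcases Nat.le_total j2 j1 with hle | hle
    · exact hne (fib_eq hw2 (he1.trans he2.symm) hle hj1)
    · exact hne (fib_eq hw1 (he2.trans he1.symm) hle hj2).symm
  have huniv : Finset.univ = T.biUnion fib := by
    apply Finset.eq_of_subset_of_card_le ?_ ?_ |>.symm
    · intro v _; exact Finset.mem_univ v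
    · exact Finset.card_le_card (fun v _ => by
        obtain ⟨w, hw, hlt⟩ := hcover v
        exact Finset.mem_biUnion.mpr ⟨w, hw, (hmemfib w hw v).mpr hlt⟩)
  have hcardfib : ∀ w ∈ T, (fib w).card = gnext T w := by
    intro w hw
    rw [hfib]
    rw [Finset.card_image_of_injOn, Finset.card_range]
    intro j1 hj1 j2 hj2 he
    simp only [Finset.coe_range, Set.mem_Iio] at hj1 hj2
    exact adda_left_cancel (lt_of_lt_of_le hj1 (gnext_le_n hw))
      (lt_of_lt_of_le hj2 (gnext_le_n hw)) he
  have : (Finset.univ : Finset (Fin n)).card = ∑ w ∈ T, (fib w).card := by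
    rw [huniv, Finset.card_biUnion hdisj]
  rw [Finset.card_univ, Fintype.card_fin] at this
  calc ∑ w ∈ T, gnext T w = ∑ w ∈ T, (fib w).card :=
        Finset.sum_congr rfl (fun w hw => (hcardfib w hw).symm)
    _ = n := this.symm

end Towers

section Main

variable {n k t r : ℕ} {T : Finset (Fin n)}

lemma cw_tower_lb {w : Fin n} (hw : w ∈ T) {u : Fin n} (hu : u ∈ T) {H : ℕ}
    (hH : 0 < H) (hbig : H < gnext T w) :
    gnext T w - H ≤ cw (adda w H) u ∧ cw (adda w H) u ≤ n - H := by
  have hHn : H ≤ n := le_trans (le_of_lt hbig) (gnext_le_n hw)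
  have he : u = adda w (H + cw (adda w H) u) := by
    rw [← adda_adda]; exact (adda_cw _ u).symm
  constructor
  · by_contra hc
    push_neg at hc
    have hmem : adda w (H + cw (adda w H) u) ∈ T := he ▸ hu
    exact absurd hmem (gnext_min (by omega) (by omega))
  · by_contra hc
    push_neg at hc
    have hcn := cw_lt (adda w H) u
    have he2 : adda w (H + cw (adda w H) u) = adda w (H + cw (adda w H) u - n) := by
      have h3 : H + cw (adda w H) u = (H + cw (adda w H) u - n) + n := by omega
      conv_lhs => rw [h3]
      rw [← adda_adda, adda_n]
    have hmem : adda w (H + cw (adda w H) u - n) ∈ T := by rw [← he2, ← he]; exact hu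
    exact absurd hmem (gnext_min (by omega) (by omega))

lemma witness_signal (hk : 1 ≤ k) (ht : 1 ≤ t)
    (hn2 : 2*((t-1)*k+1) ≤ n)
    (hb : IsCycleBroadcasting n k t r T)
    {w : Fin n} (hw : w ∈ T) (hbig : (t-1)*k + 1 < gnext T w) :
    r ≤ ∑ u ∈ T.filter (fun u => cw (adda w ((t-1)*k+1)) u ≤ (t-1)*k),
          phi k t (cw (adda w ((t-1)*k+1)) u) := by
  classical
  have hterm : ∀ u ∈ T,
      t - cyclePowDist n k u (adda w ((t-1)*k+1)) ≤
        if cw (adda w ((t-1)*k+1)) u ≤ (t-1)*k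
          then phi k t (cw (adda w ((t-1)*k+1)) u) else 0 := by
    intro u hu
    obtain ⟨hlb, hub⟩ := cw_tower_lb hw hu (by omega) hbig
    have hune : adda w ((t-1)*k+1) ≠ u := by
      intro heq
      have h0 : cw (adda w ((t-1)*k+1)) u = 0 := by rw [heq]; exact cw_self u
      omega
    have hcc : cw u (adda w ((t-1)*k+1)) = n - cw (adda w ((t-1)*k+1)) u := by
      have := cw_add_cw hune
      omega
    rw [dist_eq]
    by_cases hcs : cw (adda w ((t-1)*k+1)) u ≤ (t-1)*k
    · simp only [hcs, if_true]
      have hmin : min (cw u (adda w ((t-1)*k+1))) (cw (adda w ((t-1)*k+1)) u)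
          = cw (adda w ((t-1)*k+1)) u := by
        rw [hcc]; omega
      rw [hmin]
      simp only [phi]
      exact le_rfl
    · simp only [hcs, if_false]
      push_neg at hcs
      have hmin : (t-1)*k + 1 ≤ min (cw u (adda w ((t-1)*k+1))) (cw (adda w ((t-1)*k+1)) u) := by
        rw [hcc]; omega
      have hd : t ≤ (min (cw u (adda w ((t-1)*k+1))) (cw (adda w ((t-1)*k+1)) u) + k - 1)/k := by
        rw [Nat.le_div_iff_mul_le (by omega)]
        have := tk_eq (k := k) ht
        omega
      omega
  calc r ≤ ∑ u ∈ T, (t - cyclePowDist n k u (adda w ((t-1)*k+1))) := hb _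
    _ ≤ ∑ u ∈ T, (if cw (adda w ((t-1)*k+1)) u ≤ (t-1)*k
          then phi k t (cw (adda w ((t-1)*k+1)) u) else 0) :=
        Finset.sum_le_sum hterm
    _ = _ := (Finset.sum_filter _ _).symm

lemma group_bound (hk : 1 ≤ k) (hr : 1 ≤ r) (htr : r ≤ t)
    (hn2 : 2*((2*t-r-1)*k+1) ≤ n)
    (hb : IsCycleBroadcasting n k t r T)
    {w : Fin n} (hw : w ∈ T) (hbig : (t-1)*k + 1 < gnext T w) :
    ∃ l ∈ T.filter (fun u => cw (adda w ((t-1)*k+1)) u ≤ (t-1)*k),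
      (∀ u ∈ (T.filter (fun u => cw (adda w ((t-1)*k+1)) u ≤ (t-1)*k)).erase l,
          gnext T u ≤ (t-1)*k) ∧
      w ∉ T.filter (fun u => cw (adda w ((t-1)*k+1)) u ≤ (t-1)*k) ∧
      gnext T w + ∑ u ∈ (T.filter (fun u => cw (adda w ((t-1)*k+1)) u ≤ (t-1)*k)).erase l,
          gnext T u
        ≤ (T.filter (fun u => cw (adda w ((t-1)*k+1)) u ≤ (t-1)*k)).card * ((2*t-r-1)*k+1) := by
  classical
  have ht : 1 ≤ t := le_trans hr htr
  have hHs : (t-1)*k + 1 ≤ (2*t-r-1)*k + 1 := by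
    have : (t-1)*k ≤ (2*t-r-1)*k := Nat.mul_le_mul_right _ (by omega)
    omega
  set vW := adda w ((t-1)*k+1) with hvW
  set SW := T.filter (fun u => cw vW u ≤ (t-1)*k) with hSWdef
  have hsig : r ≤ ∑ u ∈ SW, phi k t (cw vW u) :=
    witness_signal hk ht (by omega) hb hw hbig
  have hSWne : SW.Nonempty := by
    rcases SW.eq_empty_or_nonempty with he | h
    · rw [he, Finset.sum_empty] at hsig; omega
    · exact h
  obtain ⟨l, hl, hlmax⟩ := SW.exists_max_image (fun u => cw vW u) hSWne
  have hSWsub : SW ⊆ T := Finset.filter_subset _ _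
  have hcwl : cw vW l ≤ (t-1)*k := (Finset.mem_filter.mp hl).2
  have hlb : ∀ u ∈ SW, gnext T w - ((t-1)*k+1) ≤ cw vW u := fun u hu =>
    (cw_tower_lb hw (hSWsub hu) (by omega) hbig).1
  have hub : ∀ u ∈ SW, cw vW u ≤ n - ((t-1)*k+1) := fun u hu =>
    (cw_tower_lb hw (hSWsub hu) (by omega) hbig).2
  have hgle := gnext_le_n hw
  -- w not in SW
  have hcww : cw vW w = n - ((t-1)*k+1) := by
    have h1 : adda vW (n - ((t-1)*k+1)) = w := by
      rw [hvW, adda_adda]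
      have he : (t-1)*k+1 + (n - ((t-1)*k+1)) = n := by omega
      rw [he, adda_n]
    rw [← h1, cw_adda_of_lt _ (by omega)]
  have hwSW : w ∉ SW := by
    intro hmem
    have := (Finset.mem_filter.mp hmem).2
    omega
  have hu_eq : ∀ u : Fin n, adda vW (cw vW u) = u := fun u => adda_cw vW u
  have hxle : gnext T w - ((t-1)*k+1) ≤ (t-1)*k := by
    obtain ⟨u, hu⟩ := hSWne
    have h1 := hlb u hu
    have h2 := (Finset.mem_filter.mp hu).2
    omega
  have hxlt : gnext T w - ((t-1)*k+1) < n := by omega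
  have hnextw : adda vW (gnext T w - ((t-1)*k+1)) ∈ SW := by
    rw [hSWdef, Finset.mem_filter]
    constructor
    · have he : adda vW (gnext T w - ((t-1)*k+1)) = adda w (gnext T w) := by
        rw [hvW, adda_adda]
        congr 1
        omega
      rw [he]
      exact (gnext_pos_mem hw).2
    · rw [cw_adda_of_lt _ hxlt]
      exact hxle
  have hcwnextw : cw vW (adda vW (gnext T w - ((t-1)*k+1))) = gnext T w - ((t-1)*k+1) :=
    cw_adda_of_lt _ hxlt
  have hkey : ∀ u ∈ SW.erase l,
      gnext T u + cw vW u ≤ cw vW l ∧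
      adda u (gnext T u) ∈ SW ∧ cw vW (adda u (gnext T u)) = cw vW u + gnext T u := by
    intro u hu
    obtain ⟨hunel, huSW⟩ := Finset.mem_erase.mp hu
    have huT : u ∈ T := hSWsub huSW
    have hcwu : cw vW u ≤ (t-1)*k := (Finset.mem_filter.mp huSW).2
    have hmax := hlmax u huSW
    have hlt : cw vW u < cw vW l := by
      rcases Nat.eq_or_lt_of_le hmax with he | h
      · exact absurd (by rw [← hu_eq u, ← hu_eq l, he]) hunel
      · exact h
    have hg_le : gnext T u ≤ cw vW l - cw vW u := by
      apply gnext_le (by omega)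
      have h2 : cw vW u + (cw vW l - cw vW u) = cw vW l := by omega
      have h4 := adda_adda vW (cw vW u) (cw vW l - cw vW u)
      rw [hu_eq u, h2, hu_eq l] at h4
      rw [h4]
      exact hSWsub hl
    have hsum_lt : cw vW u + gnext T u < n := by
      have := cw_lt vW l
      omega
    have hcwnu : cw vW (adda u (gnext T u)) = cw vW u + gnext T u := by
      have h5 := cw_adda_of_lt vW hsum_lt
      have h6 : adda vW (cw vW u + gnext T u) = adda u (gnext T u) := by
        rw [← adda_adda, hu_eq u]
      rw [h6] at h5
      exact h5
    refine ⟨by omega, ?_, hcwnu⟩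
    rw [hSWdef, Finset.mem_filter]
    exact ⟨(gnext_pos_mem huT).2, by omega⟩
  rcases Nat.lt_or_ge SW.card 2 with hc1 | hc2
  · -- singleton case
    have hcard1 : SW.card = 1 := by
      have := Finset.card_pos.mpr hSWne
      omega
    have hSWl : SW = {l} := by
      obtain ⟨a, ha⟩ := Finset.card_eq_one.mp hcard1
      rw [ha] at hl ⊢
      rw [Finset.mem_singleton] at hl
      rw [hl]
    refine ⟨l, hl, ?_, hwSW, ?_⟩
    · intro u hu
      rw [hSWl, Finset.erase_singleton] at hu
      exact absurd hu (Finset.notMem_empty u)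
    · rw [hSWl, Finset.erase_singleton, Finset.sum_empty, Finset.card_singleton]
      have hphil : r ≤ phi k t (cw vW l) := by
        rw [hSWl, Finset.sum_singleton] at hsig
        exact hsig
      have hle2 := le_of_phi_ge hk hr hphil
      have hxlel := hlb l hl
      have htr1 : (t-1)*k + (t-r)*k = (2*t-r-1)*k := by
        rw [← Nat.add_mul]
        congr 1
        omega
      omega
  · -- at least two servers
    have hB : ∀ u ∈ SW.erase l, gnext T u ≤ (t-1)*k := by
      intro u hu
      have h1 := (hkey u hu).1
      omega
    refine ⟨l, hl, hB, hwSW, ?_⟩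
    have hinj : ∀ u1 ∈ SW.erase l, ∀ u2 ∈ SW.erase l,
        adda u1 (gnext T u1) = adda u2 (gnext T u2) → u1 = u2 := by
      intro u1 hu1 u2 hu2 he
      by_contra hne
      obtain ⟨h1a, h1b, h1c⟩ := hkey u1 hu1
      obtain ⟨h2a, h2b, h2c⟩ := hkey u2 hu2
      have hg1 := (gnext_pos_mem (hSWsub (Finset.mem_of_mem_erase hu1))).1
      have hg2 := (gnext_pos_mem (hSWsub (Finset.mem_of_mem_erase hu2))).1
      have hcw12 : cw vW u1 + gnext T u1 = cw vW u2 + gnext T u2 := by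
        rw [← h1c, ← h2c, he]
      have hcwne : cw vW u1 ≠ cw vW u2 := by
        intro hceq
        exact hne (by rw [← hu_eq u1, ← hu_eq u2, hceq])
      rcases Nat.lt_or_ge (cw vW u1) (cw vW u2) with hlt | hge
      · have h3 : cw vW u1 + (cw vW u2 - cw vW u1) = cw vW u2 := by omega
        have he2 := adda_adda vW (cw vW u1) (cw vW u2 - cw vW u1)
        rw [hu_eq u1, h3, hu_eq u2] at he2
        have hmem : adda u1 (cw vW u2 - cw vW u1) ∈ T := by
          rw [he2]; exact hSWsub (Finset.mem_of_mem_erase hu2)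
        exact absurd hmem (gnext_min (by omega) (by omega))
      · have hlt2 : cw vW u2 < cw vW u1 := by omega
        have h3 : cw vW u2 + (cw vW u1 - cw vW u2) = cw vW u1 := by omega
        have he2 := adda_adda vW (cw vW u2) (cw vW u1 - cw vW u2)
        rw [hu_eq u2, h3, hu_eq u1] at he2
        have hmem : adda u2 (cw vW u1 - cw vW u2) ∈ T := by
          rw [he2]; exact hSWsub (Finset.mem_of_mem_erase hu1)
        exact absurd hmem (gnext_min (by omega) (by omega))
    have hsum1 : ∑ u ∈ SW.erase l, gnext T u + ∑ u ∈ SW.erase l, cw vW u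
        = ∑ u ∈ SW.erase l, cw vW (adda u (gnext T u)) := by
      rw [← Finset.sum_add_distrib]
      apply Finset.sum_congr rfl
      intro u hu
      rw [(hkey u hu).2.2]
      omega
    have himg : ∑ u ∈ SW.erase l, cw vW (adda u (gnext T u))
        = ∑ z ∈ (SW.erase l).image (fun u => adda u (gnext T u)), cw vW z := by
      rw [Finset.sum_image hinj]
    have hsub2 : (SW.erase l).image (fun u => adda u (gnext T u))
        ⊆ SW.erase (adda vW (gnext T w - ((t-1)*k+1))) := by
      intro z hz
      obtain ⟨u, hu, rfl⟩ := Finset.mem_image.mp hz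
      obtain ⟨h1a, h1b, h1c⟩ := hkey u hu
      rw [Finset.mem_erase]
      refine ⟨?_, h1b⟩
      intro heq
      have h4 : cw vW (adda u (gnext T u)) = gnext T w - ((t-1)*k+1) := by
        rw [heq, hcwnextw]
      rw [h1c] at h4
      have hxu := hlb u (Finset.mem_of_mem_erase hu)
      have hgu := (gnext_pos_mem (hSWsub (Finset.mem_of_mem_erase hu))).1
      omega
    have hsum2 : ∑ z ∈ (SW.erase l).image (fun u => adda u (gnext T u)), cw vW z
        ≤ ∑ z ∈ SW.erase (adda vW (gnext T w - ((t-1)*k+1))), cw vW z :=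
      Finset.sum_le_sum_of_subset hsub2
    have hesum1 : ∑ z ∈ SW.erase (adda vW (gnext T w - ((t-1)*k+1))), cw vW z
        + (gnext T w - ((t-1)*k+1)) = ∑ z ∈ SW, cw vW z := by
      have h5 := Finset.sum_erase_add SW (fun z => cw vW z) hnextw
      simpa only [hcwnextw] using h5
    have hesum2 : ∑ z ∈ SW.erase l, cw vW z + cw vW l = ∑ z ∈ SW, cw vW z :=
      Finset.sum_erase_add SW _ hl
    have hs2 : 2 * ((2*t-r-1)*k + 1) ≤ SW.card * ((2*t-r-1)*k + 1) :=
      Nat.mul_le_mul_right _ hc2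
    omega

lemma main_lower (hk : 1 ≤ k) (hr : 1 ≤ r) (htr : r ≤ t)
    (hn2 : 2*((2*t-r-1)*k+1) ≤ n)
    (hb : IsCycleBroadcasting n k t r T) :
    n ≤ T.card * ((2*t-r-1)*k + 1) := by
  classical
  have ht : 1 ≤ t := le_trans hr htr
  have hnpos : 0 < n := by omega
  rcases T.eq_empty_or_nonempty with hTe | hTne
  · exfalso
    have := hb ⟨0, hnpos⟩
    rw [hTe, Finset.sum_empty] at this
    omega
  have hHs : (t-1)*k + 1 ≤ (2*t-r-1)*k + 1 := by
    have : (t-1)*k ≤ (2*t-r-1)*k := Nat.mul_le_mul_right _ (by omega)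
    omega
  set SWf : Fin n → Finset (Fin n) :=
    fun w => T.filter (fun u => cw (adda w ((t-1)*k+1)) u ≤ (t-1)*k) with hSWf
  set D : Finset (Fin n) := T.filter (fun w => (t-1)*k + 1 < gnext T w) with hD
  have hch : ∀ w : Fin n, ∃ l : Fin n, w ∈ T → (t-1)*k + 1 < gnext T w →
      l ∈ SWf w ∧
      (∀ u ∈ (SWf w).erase l, gnext T u ≤ (t-1)*k) ∧
      w ∉ SWf w ∧
      gnext T w + ∑ u ∈ (SWf w).erase l, gnext T u
        ≤ (SWf w).card * ((2*t-r-1)*k+1) := by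
    intro w
    by_cases h : w ∈ T ∧ (t-1)*k + 1 < gnext T w
    · obtain ⟨l, hl, h2, h3, h4⟩ := group_bound hk hr htr hn2 hb h.1 h.2
      exact ⟨l, fun _ _ => ⟨hl, h2, h3, h4⟩⟩
    · exact ⟨w, fun h1 h2 => absurd ⟨h1, h2⟩ h⟩
  choose lf hlf using hch
  set G : Fin n → Finset (Fin n) := fun w => insert w ((SWf w).erase (lf w)) with hG
  have hSWdisj : ∀ w1 ∈ D, ∀ w2 ∈ D, w1 ≠ w2 → ∀ u, u ∈ SWf w1 → u ∈ SWf w2 → False := by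
    intro w1 hw1 w2 hw2 hne u hu1 hu2
    simp only [hD, Finset.mem_filter] at hw1 hw2
    obtain ⟨hw1T, hw1big⟩ := hw1
    obtain ⟨hw2T, hw2big⟩ := hw2
    simp only [hSWf, Finset.mem_filter] at hu1 hu2
    have hc1 := hu1.2
    have hc2 := hu2.2
    have he1 : adda w1 ((t-1)*k+1 + cw (adda w1 ((t-1)*k+1)) u) = u := by
      rw [← adda_adda]; exact adda_cw _ u
    have he2 : adda w2 ((t-1)*k+1 + cw (adda w2 ((t-1)*k+1)) u) = u := by
      rw [← adda_adda]; exact adda_cw _ u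
    rcases Nat.le_total (cw (adda w2 ((t-1)*k+1)) u) (cw (adda w1 ((t-1)*k+1)) u) with hle | hle
    · have he3 : adda (adda w1 (cw (adda w1 ((t-1)*k+1)) u - cw (adda w2 ((t-1)*k+1)) u))
          ((t-1)*k+1 + cw (adda w2 ((t-1)*k+1)) u)
          = adda w2 ((t-1)*k+1 + cw (adda w2 ((t-1)*k+1)) u) := by
        rw [adda_adda]
        have harg : cw (adda w1 ((t-1)*k+1)) u - cw (adda w2 ((t-1)*k+1)) u
            + ((t-1)*k+1 + cw (adda w2 ((t-1)*k+1)) u)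
            = (t-1)*k+1 + cw (adda w1 ((t-1)*k+1)) u := by omega
        rw [harg, he1, he2]
      have he4 := adda_right_cancel he3
      rcases Nat.eq_zero_or_pos
          (cw (adda w1 ((t-1)*k+1)) u - cw (adda w2 ((t-1)*k+1)) u) with h0 | hposd
      · rw [h0, adda_zero] at he4
        exact hne he4
      · have hmem : adda w1 (cw (adda w1 ((t-1)*k+1)) u - cw (adda w2 ((t-1)*k+1)) u) ∈ T := by
          rw [he4]; exact hw2T
        exact absurd hmem (gnext_min hposd (by omega))
    · have he3 : adda (adda w2 (cw (adda w2 ((t-1)*k+1)) u - cw (adda w1 ((t-1)*k+1)) u))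
          ((t-1)*k+1 + cw (adda w1 ((t-1)*k+1)) u)
          = adda w1 ((t-1)*k+1 + cw (adda w1 ((t-1)*k+1)) u) := by
        rw [adda_adda]
        have harg : cw (adda w2 ((t-1)*k+1)) u - cw (adda w1 ((t-1)*k+1)) u
            + ((t-1)*k+1 + cw (adda w1 ((t-1)*k+1)) u)
            = (t-1)*k+1 + cw (adda w2 ((t-1)*k+1)) u := by omega
        rw [harg, he2, he1]
      have he4 := adda_right_cancel he3
      rcases Nat.eq_zero_or_pos
          (cw (adda w2 ((t-1)*k+1)) u - cw (adda w1 ((t-1)*k+1)) u) with h0 | hposd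
      · rw [h0, adda_zero] at he4
        exact hne he4.symm
      · have hmem : adda w2 (cw (adda w2 ((t-1)*k+1)) u - cw (adda w1 ((t-1)*k+1)) u) ∈ T := by
          rw [he4]; exact hw1T
        exact absurd hmem (gnext_min hposd (by omega))
  have hGdisj : ∀ w1 ∈ D, ∀ w2 ∈ D, w1 ≠ w2 → Disjoint (G w1) (G w2) := by
    intro w1 hw1 w2 hw2 hne
    rw [Finset.disjoint_left]
    intro u hu1 hu2
    have hw1' := hw1
    have hw2' := hw2
    simp only [hD, Finset.mem_filter] at hw1' hw2'
    obtain ⟨hl1, hB1, hw1n, hS1⟩ := hlf w1 hw1'.1 hw1'.2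
    obtain ⟨hl2, hB2, hw2n, hS2⟩ := hlf w2 hw2'.1 hw2'.2
    rw [hG] at hu1 hu2
    simp only [Finset.mem_insert] at hu1 hu2
    rcases hu1 with rfl | hu1
    · rcases hu2 with rfl | hu2
      · exact hne rfl
      · have := hB2 u hu2
        have := hw1'.2
        omega
    · rcases hu2 with rfl | hu2
      · have := hB1 u hu1
        have := hw2'.2
        omega
      · exact hSWdisj w1 hw1 w2 hw2 hne u (Finset.mem_of_mem_erase hu1)
          (Finset.mem_of_mem_erase hu2)
  have hGsum : ∀ w ∈ D, ∑ u ∈ G w, gnext T u ≤ (G w).card * ((2*t-r-1)*k+1) := by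
    intro w hw
    simp only [hD, Finset.mem_filter] at hw
    obtain ⟨hl, hB, hwn, hS⟩ := hlf w hw.1 hw.2
    have hwnotin : w ∉ (SWf w).erase (lf w) := fun h => hwn (Finset.mem_of_mem_erase h)
    rw [hG]
    simp only
    rw [Finset.sum_insert hwnotin, Finset.card_insert_of_notMem hwnotin]
    have hcard : ((SWf w).erase (lf w)).card = (SWf w).card - 1 :=
      Finset.card_erase_of_mem hl
    have hcpos : 1 ≤ (SWf w).card := Finset.card_pos.mpr ⟨lf w, hl⟩
    have heq : ((SWf w).card - 1 + 1) * ((2*t-r-1)*k+1) = (SWf w).card * ((2*t-r-1)*k+1) := by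
      congr 1
      omega
    rw [hcard]
    omega
  set U : Finset (Fin n) := D.biUnion G with hU
  have hGsubT : ∀ w ∈ D, G w ⊆ T := by
    intro w hw
    simp only [hD, Finset.mem_filter] at hw
    intro u hu
    rw [hG] at hu
    simp only [Finset.mem_insert] at hu
    rcases hu with rfl | hu
    · exact hw.1
    · exact Finset.filter_subset _ _ (Finset.mem_of_mem_erase hu)
  have hUsubT : U ⊆ T := by
    intro u hu
    rw [hU] at hu
    obtain ⟨w, hw, hmem⟩ := Finset.mem_biUnion.mp hu
    exact hGsubT w hw hmem
  have hsum := sum_gnext hTne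
  have hUsum : ∑ u ∈ U, gnext T u ≤ U.card * ((2*t-r-1)*k+1) := by
    rw [hU, Finset.sum_biUnion (fun w1 hw1 w2 hw2 hne =>
      hGdisj w1 (Finset.mem_coe.mp hw1) w2 (Finset.mem_coe.mp hw2) hne),
      Finset.card_biUnion hGdisj]
    calc ∑ w ∈ D, ∑ u ∈ G w, gnext T u ≤ ∑ w ∈ D, (G w).card * ((2*t-r-1)*k+1) :=
        Finset.sum_le_sum hGsum
      _ = (∑ w ∈ D, (G w).card) * ((2*t-r-1)*k+1) := by rw [Finset.sum_mul]
  have hrest : ∑ u ∈ T \ U, gnext T u ≤ (T \ U).card * ((2*t-r-1)*k+1) := by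
    calc ∑ u ∈ T \ U, gnext T u ≤ ∑ _u ∈ T \ U, ((2*t-r-1)*k+1) := by
          apply Finset.sum_le_sum
          intro u hu
          obtain ⟨huT, huU⟩ := Finset.mem_sdiff.mp hu
          have huD : u ∉ D := by
            intro hd
            apply huU
            rw [hU]
            refine Finset.mem_biUnion.mpr ⟨u, hd, ?_⟩
            rw [hG]
            exact Finset.mem_insert_self _ _
          have hsmall : ¬ ((t-1)*k + 1 < gnext T u) := by
            intro hbig
            exact huD (by rw [hD]; exact Finset.mem_filter.mpr ⟨huT, hbig⟩)
          omega
      _ = (T \ U).card * ((2*t-r-1)*k+1) := by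
          rw [Finset.sum_const, smul_eq_mul]
  have hcards : (T \ U).card + U.card = T.card := Finset.card_sdiff_add_card_eq_card hUsubT
  have hsplit : ∑ u ∈ T \ U, gnext T u + ∑ u ∈ U, gnext T u = ∑ u ∈ T, gnext T u :=
    Finset.sum_sdiff hUsubT
  have hfinal : T.card * ((2*t-r-1)*k+1)
      = (T \ U).card * ((2*t-r-1)*k+1) + U.card * ((2*t-r-1)*k+1) := by
    rw [← Nat.add_mul, hcards]
  omega

end Main

section Constructions

variable {n k t r : ℕ}

lemma term_ge (u v : Fin n) {k t a : ℕ}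
    (h : min (max u.val v.val - min u.val v.val) (n - (max u.val v.val - min u.val v.val)) ≤ a) :
    phi k t a ≤ t - cyclePowDist n k u v := by
  unfold cyclePowDist phi
  have h2 : (min (max u.val v.val - min u.val v.val)
      (n - (max u.val v.val - min u.val v.val)) + k - 1) / k ≤ (a + k - 1) / k :=
    Nat.div_le_div_right (by omega)
  omega

lemma phi_single (hk : 1 ≤ k) (hr : 1 ≤ r) (htr : r ≤ t) : r ≤ phi k t ((t-r)*k) := by
  have h2 : ((t-r)*k + k - 1)/k < (t - r) + 1 := by
    rw [Nat.div_lt_iff_lt_mul (by omega)]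
    have h3 : ((t-r)+1)*k = (t-r)*k + k := by ring
    omega
  unfold phi
  omega

lemma broadcast_single (hn3 : 3 ≤ n) (hk : 1 ≤ k) (hr : 1 ≤ r) (htr : r ≤ t)
    (hsmall : n ≤ 2*(t-r)*k + 1) :
    IsCycleBroadcasting n k t r {(⟨0, by omega⟩ : Fin n)} := by
  intro v
  rw [Finset.sum_singleton]
  have hv := v.isLt
  have e0 : (⟨0, by omega⟩ : Fin n).val = 0 := rfl
  have hassoc : 2*(t-r)*k = 2*((t-r)*k) := by ring
  have hterm : phi k t ((t-r)*k) ≤ t - cyclePowDist n k ⟨0, by omega⟩ v := by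
    apply term_ge
    rw [e0]
    omega
  have := phi_single hk hr htr (t := t)
  omega

lemma two_le_card {T : Finset (Fin n)} (hn3 : 3 ≤ n) (hk : 1 ≤ k) (hr : 1 ≤ r)
    (htr : r ≤ t) (hbig : 2*(t-r)*k + 2 ≤ n) (hb : IsCycleBroadcasting n k t r T) :
    2 ≤ T.card := by
  by_contra hc
  push_neg at hc
  have hle : T.card ≤ 1 := by omega
  haveI : Nonempty (Fin n) := ⟨⟨0, by omega⟩⟩
  obtain ⟨w, hsub⟩ := Finset.card_le_one_iff_subset_singleton.mp hle
  have hnhalf : n/2 < n := Nat.div_lt_self (by omega) (by omega)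
  have hv := hb (adda w (n/2))
  have hsum_le : ∑ u ∈ T, (t - cyclePowDist n k u (adda w (n/2)))
      ≤ t - cyclePowDist n k w (adda w (n/2)) := by
    calc ∑ u ∈ T, (t - cyclePowDist n k u (adda w (n/2)))
        ≤ ∑ u ∈ ({w} : Finset (Fin n)), (t - cyclePowDist n k u (adda w (n/2))) :=
          Finset.sum_le_sum_of_subset hsub
      _ = t - cyclePowDist n k w (adda w (n/2)) := Finset.sum_singleton _ _
  have hc1 : cw w (adda w (n/2)) = n / 2 := cw_adda_of_lt _ hnhalf
  have hwv : w ≠ adda w (n/2) := by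
    intro he
    have h0 : cw w (adda w (n/2)) = 0 := by rw [← he]; exact cw_self w
    omega
  have hc2 := cw_add_cw hwv
  have hassoc : 2*(t-r)*k = 2*((t-r)*k) := by ring
  have hdist : t - r + 1 ≤ cyclePowDist n k w (adda w (n/2)) := by
    rw [dist_eq]
    rw [Nat.le_div_iff_mul_le (by omega)]
    have he : (t - r + 1) * k = (t-r)*k + k := by ring
    omega
  omega

lemma broadcast_pair (hn3 : 3 ≤ n) (hk : 1 ≤ k) (hr : 1 ≤ r) (htr : r ≤ t)
    (hsmall : n ≤ (2*t-r-1)*k + 1) :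
    IsCycleBroadcasting n k t r {(⟨0, by omega⟩ : Fin n), ⟨1, by omega⟩} := by
  intro v
  have hne : (⟨0, by omega⟩ : Fin n) ≠ ⟨1, by omega⟩ := by
    intro h
    have := congrArg Fin.val h
    simp at this
  rw [Finset.sum_pair hne]
  have hv := v.isLt
  have e0 : (⟨0, by omega⟩ : Fin n).val = 0 := rfl
  have e1 : (⟨1, by omega⟩ : Fin n).val = 1 := rfl
  by_cases h0 : v.val = 0
  · have hd : cyclePowDist n k ⟨0, by omega⟩ v = 0 := by
      have hd2 : cyclePowDist n k ⟨0, by omega⟩ v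
          = (min (max 0 0 - min 0 0) (n - (max 0 0 - min 0 0)) + k - 1)/k := by
        unfold cyclePowDist
        rw [e0, h0]
      rw [hd2]
      have h5 : min (max 0 0 - min 0 0) (n - (max 0 0 - min 0 0)) = 0 := by omega
      rw [h5]
      exact Nat.div_eq_of_lt (by omega)
    rw [hd]
    omega
  · have t1 : phi k t (n - v.val) ≤ t - cyclePowDist n k ⟨0, by omega⟩ v := by
      apply term_ge
      rw [e0]
      omega
    have t2 : phi k t (v.val - 1) ≤ t - cyclePowDist n k ⟨1, by omega⟩ v := by
      apply term_ge
      rw [e1]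
      omega
    have hp := phi_pair (k := k) (t := t) (r := r) (a := v.val - 1) (b := n - v.val)
      hk hr htr (by omega)
    omega

lemma broadcast_multi (hn3 : 3 ≤ n) (hk : 1 ≤ k) (hr : 1 ≤ r) (htr : r ≤ t)
    (hbig : (2*t-r-1)*k + 1 < n) :
    ∃ Tc : Finset (Fin n), IsCycleBroadcasting n k t r Tc ∧
      Tc.card = (n + (2*t-r-1)*k) / ((2*t-r-1)*k + 1) := by
  classical
  have hnpos : 0 < n := by omega
  set B := (2*t-r-1)*k with hB
  set s := B + 1 with hs
  set m := (n + B) / s with hm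
  have hspos : 0 < s := by omega
  have hdm := Nat.div_add_mod (n + B) s
  rw [← hm] at hdm
  have hmod := Nat.mod_lt (n + B) hspos
  have hcomm : s * m = m * s := Nat.mul_comm _ _
  have hnms : n ≤ m * s := by omega
  have hm2 : 2 ≤ m := by
    have h2 : 2 * s ≤ n + B := by omega
    exact (Nat.le_div_iff_mul_le hspos).mpr h2
  have hm1s : (m - 1) * s < n := by
    have h3 : (m-1) * s + s = m * s := by
      have h4 : m - 1 + 1 = m := by omega
      calc (m-1) * s + s = (m - 1 + 1) * s := by ring
        _ = m * s := by rw [h4]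
    omega
  have hpos_lt : ∀ i, i < m → i * s < n := by
    intro i hi
    have h1 : i * s ≤ (m-1) * s := Nat.mul_le_mul_right _ (by omega)
    omega
  set pos : ℕ → Fin n := fun i => ⟨i * s % n, Nat.mod_lt _ hnpos⟩ with hposf
  have hpos_val : ∀ i, i < m → (pos i).val = i * s := by
    intro i hi
    simp only [hposf]
    exact Nat.mod_eq_of_lt (hpos_lt i hi)
  set Tc := (Finset.range m).image pos with hTc
  have hcard : Tc.card = m := by
    rw [hTc, Finset.card_image_of_injOn, Finset.card_range]
    intro i hi j hj he
    simp only [Finset.coe_range, Set.mem_Iio] at hi hj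
    have h5 := congrArg Fin.val he
    rw [hpos_val i hi, hpos_val j hj] at h5
    exact Nat.eq_of_mul_eq_mul_right hspos h5
  refine ⟨Tc, ?_, hcard⟩
  intro v
  have hv := v.isLt
  set q := v.val / s with hq
  have hdm2 := Nat.div_add_mod v.val s
  rw [← hq] at hdm2
  have hmod2 := Nat.mod_lt v.val hspos
  have hcomm2 : s * q = q * s := Nat.mul_comm _ _
  have hq1 : q * s ≤ v.val := by omega
  have hq2 : v.val < q * s + s := by omega
  have hqm : q + 1 ≤ m := by
    have h6 : v.val < m * s := lt_of_lt_of_le hv hnms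
    have h7 : q < m := by
      rw [hq]
      exact (Nat.div_lt_iff_lt_mul hspos).mpr h6
    omega
  have hmemq : pos q ∈ Tc := by
    rw [hTc]
    exact Finset.mem_image.mpr ⟨q, Finset.mem_range.mpr (by omega), rfl⟩
  have hvq : (pos q).val = q * s := hpos_val q (by omega)
  rcases Nat.lt_or_ge (q+1) m with hlt | hge
  · have hmem2 : pos (q+1) ∈ Tc := by
      rw [hTc]
      exact Finset.mem_image.mpr ⟨q+1, Finset.mem_range.mpr hlt, rfl⟩
    have hv2 : (pos (q+1)).val = (q+1) * s := hpos_val (q+1) hlt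
    have hqs : (q+1) * s = q * s + s := by ring
    have hne : pos q ≠ pos (q+1) := by
      intro he
      have h8 := congrArg Fin.val he
      rw [hvq, hv2] at h8
      omega
    have hsub : ({pos q, pos (q+1)} : Finset (Fin n)) ⊆ Tc := by
      intro z hz
      rcases Finset.mem_insert.mp hz with rfl | hz
      · exact hmemq
      · rw [Finset.mem_singleton] at hz
        rw [hz]
        exact hmem2
    have t1 : phi k t (v.val - q * s) ≤ t - cyclePowDist n k (pos q) v := by
      apply term_ge
      rw [hvq]
      have h9 := hpos_lt q (by omega)
      omega
    have t2 : phi k t (q * s + s - v.val) ≤ t - cyclePowDist n k (pos (q+1)) v := by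
      apply term_ge
      rw [hv2, hqs]
      have h9 := hpos_lt (q+1) hlt
      rw [hqs] at h9
      omega
    have hp := phi_pair (k := k) (t := t) (r := r) (a := v.val - q*s) (b := q*s + s - v.val)
      hk hr htr (by omega)
    calc r ≤ phi k t (v.val - q*s) + phi k t (q*s + s - v.val) := hp
      _ ≤ (t - cyclePowDist n k (pos q) v) + (t - cyclePowDist n k (pos (q+1)) v) := by omega
      _ = ∑ w ∈ ({pos q, pos (q+1)} : Finset (Fin n)), (t - cyclePowDist n k w v) :=
          (Finset.sum_pair (f := fun w => t - cyclePowDist n k w v) hne).symm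
      _ ≤ ∑ w ∈ Tc, (t - cyclePowDist n k w v) := Finset.sum_le_sum_of_subset hsub
  · -- last gap
    have hq4 : q + 1 = m := by omega
    have hmem0 : pos 0 ∈ Tc := by
      rw [hTc]
      exact Finset.mem_image.mpr ⟨0, Finset.mem_range.mpr (by omega), rfl⟩
    have hv0 : (pos 0).val = 0 := by
      have := hpos_val 0 (by omega)
      omega
    have hne : pos q ≠ pos 0 := by
      intro he
      have h8 := congrArg Fin.val he
      rw [hvq, hv0] at h8
      have : 1 * s ≤ q * s := Nat.mul_le_mul_right _ (by omega)
      omega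
    have hsub : ({pos q, pos 0} : Finset (Fin n)) ⊆ Tc := by
      intro z hz
      rcases Finset.mem_insert.mp hz with rfl | hz
      · exact hmemq
      · rw [Finset.mem_singleton] at hz
        rw [hz]
        exact hmem0
    have hqm1 : m * s = q * s + s := by
      have : q * s + s = (q + 1) * s := by ring
      rw [this, hq4]
    have t1 : phi k t (v.val - q * s) ≤ t - cyclePowDist n k (pos q) v := by
      apply term_ge
      rw [hvq]
      have h9 := hpos_lt q (by omega)
      omega
    have t2 : phi k t (n - v.val) ≤ t - cyclePowDist n k (pos 0) v := by
      apply term_ge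
      rw [hv0]
      omega
    have hp := phi_pair (k := k) (t := t) (r := r) (a := v.val - q*s) (b := n - v.val)
      hk hr htr (by omega)
    calc r ≤ phi k t (v.val - q*s) + phi k t (n - v.val) := hp
      _ ≤ (t - cyclePowDist n k (pos q) v) + (t - cyclePowDist n k (pos 0) v) := by omega
      _ = ∑ w ∈ ({pos q, pos 0} : Finset (Fin n)), (t - cyclePowDist n k w v) :=
          (Finset.sum_pair (f := fun w => t - cyclePowDist n k w v) hne).symm
      _ ≤ ∑ w ∈ Tc, (t - cyclePowDist n k w v) := Finset.sum_le_sum_of_subset hsub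

end Constructions

end CycleAux


open CycleAux

/-- For `n ≥ 3`, `k ≥ 1` and `t ≥ r ≥ 1`:
`γ_{t,r}(C_n^{(k)}) = 1` if `n ≤ 2(t-r)k + 1`;
`γ_{t,r}(C_n^{(k)}) = 2` if `2(t-r)k + 1 < n ≤ (2t-r-1)k + 1`;
`γ_{t,r}(C_n^{(k)}) = ⌈n / ((2t-r-1)k + 1)⌉` if `n > (2t-r-1)k + 1`. -/
theorem gammaCyclePow_eq (n k t r : ℕ) (hn : 3 ≤ n) (hk : 1 ≤ k) (hr : 1 ≤ r) (htr : r ≤ t) :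
    (n ≤ 2 * (t - r) * k + 1 → gammaCyclePow n k t r = 1) ∧
    (2 * (t - r) * k + 1 < n ∧ n ≤ (2 * t - r - 1) * k + 1 → gammaCyclePow n k t r = 2) ∧
    ((2 * t - r - 1) * k + 1 < n →
      gammaCyclePow n k t r
        = (n + (2 * t - r - 1) * k) / ((2 * t - r - 1) * k + 1)) := by
  simp only [gammaCyclePow]
  have hnpos : 0 < n := by omega
  have hempty : ∀ T : Finset (Fin n), IsCycleBroadcasting n k t r T → T.Nonempty := by
    intro T hT
    rcases T.eq_empty_or_nonempty with he | h
    · exfalso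
      have := hT ⟨0, hnpos⟩
      rw [he, Finset.sum_empty] at this
      omega
    · exact h
  refine ⟨?_, ?_, ?_⟩
  · intro h1
    have hb1 := broadcast_single hn hk hr htr h1
    have hmem : 1 ∈ {m : ℕ | ∃ T : Finset (Fin n), IsCycleBroadcasting n k t r T ∧ T.card = m} :=
      ⟨_, hb1, Finset.card_singleton _⟩
    apply le_antisymm (Nat.sInf_le hmem)
    apply le_csInf ⟨1, hmem⟩
    rintro m ⟨T, hT, rfl⟩
    exact Finset.card_pos.mpr (hempty T hT)
  · rintro ⟨h2a, h2b⟩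
    have hb2 := broadcast_pair hn hk hr htr h2b
    have hmem : 2 ∈ {m : ℕ | ∃ T : Finset (Fin n), IsCycleBroadcasting n k t r T ∧ T.card = m} := by
      refine ⟨_, hb2, ?_⟩
      rw [Finset.card_pair]
      intro h
      have := congrArg Fin.val h
      simp at this
    apply le_antisymm (Nat.sInf_le hmem)
    apply le_csInf ⟨2, hmem⟩
    rintro m ⟨T, hT, rfl⟩
    exact two_le_card hn hk hr htr (by omega) hT
  · intro h3
    obtain ⟨Tc, hTc, hcard⟩ := broadcast_multi hn hk hr htr h3
    have hmem : (n + (2*t-r-1)*k)/((2*t-r-1)*k+1)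
        ∈ {m : ℕ | ∃ T : Finset (Fin n), IsCycleBroadcasting n k t r T ∧ T.card = m} :=
      ⟨Tc, hTc, hcard⟩
    apply le_antisymm (Nat.sInf_le hmem)
    apply le_csInf ⟨_, hmem⟩
    rintro m ⟨T, hT, rfl⟩
    have hnle : n ≤ T.card * ((2*t-r-1)*k+1) := by
      rcases Nat.lt_or_ge n (2*((2*t-r-1)*k+1)) with hsm | hbig2
      · have hrs : 2*(t-r)*k ≤ (2*t-r-1)*k := by
          have h4 : 2*(t-r)*k = (2*(t-r))*k := by ring
          rw [h4]
          exact Nat.mul_le_mul_right _ (by omega)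
        have h2c : 2 ≤ T.card := two_le_card hn hk hr htr (by omega) hT
        have h5 : 2 * ((2*t-r-1)*k+1) ≤ T.card * ((2*t-r-1)*k+1) :=
          Nat.mul_le_mul_right _ h2c
        omega
      · exact main_lower hk hr htr hbig2 hT
    have hdst : 0 < (2*t-r-1)*k+1 := by omega
    rw [Nat.div_le_iff_le_mul_add_pred hdst]
    have h6 : ((2*t-r-1)*k+1) * T.card = T.card * ((2*t-r-1)*k+1) := Nat.mul_comm _ _
    omega
end

section
/- For all integers t ≥ 1 and k ≥ 1, every (t,1)-broadcasting set 𝒯 ⊆ ℤ² is also (t+k, 1+2k)-broadcasting. -/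
open scoped ENNReal

/-- ℓ1 (taxicab) distance on the grid ℤ². -/
def gridDist (u v : ℤ × ℤ) : ℕ := (u.1 - v.1).natAbs + (u.2 - v.2).natAbs

/-- Total signal received at `v` from a set of towers `T`, each transmitting strength `t`
(a tower at distance `d` contributes `max (t - d) 0`). -/
noncomputable def signal (t : ℕ) (T : Set (ℤ × ℤ)) (v : ℤ × ℤ) : ℝ≥0∞ :=
  ∑' w : T, ((t - gridDist w v : ℕ) : ℝ≥0∞)

/-- `T ⊆ ℤ²` is `(t,r)`-broadcasting if every vertex receives total signal at least `r`. -/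
def IsBroadcasting (t r : ℕ) (T : Set (ℤ × ℤ)) : Prop :=
  ∀ v : ℤ × ℤ, (r : ℝ≥0∞) ≤ signal t T v

/-- Density of a subset of ℤ²: `limsup_{n→∞} |T ∩ [-n,n]²| / (2n+1)²`. -/
noncomputable def density (T : Set (ℤ × ℤ)) : ℝ≥0∞ :=
  Filter.atTop.limsup fun n : ℕ =>
    (T ∩ {v : ℤ × ℤ | v.1.natAbs ≤ n ∧ v.2.natAbs ≤ n}).encard / (((2 * n + 1) ^ 2 : ℕ) : ℝ≥0∞)

/-- `δ_{t,r}(ℤ²)`: the infimum of the densities of `(t,r)`-broadcasting subsets of ℤ². -/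
noncomputable def deltaGrid (t r : ℕ) : ℝ≥0∞ :=
  ⨅ (T : Set (ℤ × ℤ)) (_ : IsBroadcasting t r T), density T

/-- If a set is `(t,1)`-broadcasting, every vertex has a tower within distance `t-1`. -/
lemma exists_close (t : ℕ) (T : Set (ℤ × ℤ)) (hT : IsBroadcasting t 1 T) (u : ℤ × ℤ) :
    ∃ w : T, gridDist (↑w) u < t := by
  by_contra h
  push_neg at h
  have h1 := hT u
  rw [signal] at h1
  have h0 : ∀ w : T, ((t - gridDist (↑w) u : ℕ) : ℝ≥0∞) = 0 := fun w => by
    have := h w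
    simp [Nat.sub_eq_zero_of_le this]
  rw [tsum_congr h0, tsum_zero] at h1
  simp at h1

/-- Counting bound: a tower `w` can be within distance `t-1` of at most
`t + k - d(w,v)` of the vertices `v + (j,0)`, `j ∈ [-k,k]`. -/
lemma fiber_bound (t k : ℕ) (v w : ℤ × ℤ) (F : Finset ℤ)
    (hsub : F ⊆ Finset.Icc (-(k : ℤ)) k)
    (hdist : ∀ j ∈ F, gridDist w (v.1 + j, v.2) < t)
    (hne : F.Nonempty) :
    F.card + gridDist w v ≤ t + k := by
  set a : ℤ := w.1 - v.1 with ha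
  set b : ℕ := (w.2 - v.2).natAbs with hb
  have hsub2 : F ⊆ Finset.Icc (max (-(k : ℤ)) (a - ((t : ℤ) - 1 - b)))
      (min (k : ℤ) (a + ((t : ℤ) - 1 - b))) := by
    intro j hj
    have h1 := hdist j hj
    have h2 := hsub hj
    simp only [gridDist] at h1
    simp only [Finset.mem_Icc] at h2 ⊢
    have key : w.1 - (v.1 + j, v.2).1 = a - j := by simp [ha]; ring
    rw [key] at h1
    have hb2 : (w.2 - (v.1 + j, v.2).2).natAbs = b := by simp [hb]
    rw [hb2] at h1
    omega
  have hcard := Finset.card_le_card hsub2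
  rw [Int.card_Icc] at hcard
  obtain ⟨j0, hj0⟩ := hne
  have h1 := hdist j0 hj0
  have h2 := hsub hj0
  simp only [gridDist] at h1 ⊢
  have key : w.1 - (v.1 + j0, v.2).1 = a - j0 := by simp [ha]; ring
  rw [key] at h1
  have hb2 : (w.2 - (v.1 + j0, v.2).2).natAbs = b := by simp [hb]
  rw [hb2] at h1
  simp only [Finset.mem_Icc] at h2
  have ha2 : w.1 - v.1 = a := ha.symm
  rw [ha2, ← hb]
  omega

/-- Every `(t,1)`-broadcasting set in ℤ² is also `(t+k, 1+2k)`-broadcasting. -/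
theorem broadcasting_t_one_to_shifted (t k : ℕ) (ht : 1 ≤ t) (hk : 1 ≤ k)
    (T : Set (ℤ × ℤ)) (hT : IsBroadcasting t 1 T) :
    IsBroadcasting (t + k) (1 + 2 * k) T := by
  classical
  intro v
  choose g hg using exists_close t T hT
  set f : ℤ → T := fun j => g (v.1 + j, v.2) with hf
  set S : Finset ℤ := Finset.Icc (-(k : ℤ)) k with hSdef
  set img : Finset T := S.image f with himg
  have hcard : S.card = ∑ w ∈ img, (S.filter fun j => f j = w).card :=
    Finset.card_eq_sum_card_fiberwise (fun j hj => Finset.mem_image_of_mem f hj)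
  have hS : S.card = 2 * k + 1 := by
    rw [hSdef, Int.card_Icc]; omega
  have hfib : ∀ w ∈ img, (S.filter fun j => f j = w).card + gridDist (↑w) v ≤ t + k := by
    intro w hw
    apply fiber_bound t k v
    · exact (Finset.filter_subset _ _).trans (by rw [hSdef])
    · intro j hj
      rw [Finset.mem_filter] at hj
      have := hg (v.1 + j, v.2)
      rw [show g (v.1 + j, v.2) = f j from rfl, hj.2] at this
      exact this
    · rw [himg, Finset.mem_image] at hw
      obtain ⟨j, hj, hjw⟩ := hw
      exact ⟨j, Finset.mem_filter.mpr ⟨hj, hjw⟩⟩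
  have hnat : 1 + 2 * k ≤ ∑ w ∈ img, (t + k - gridDist (↑w) v) := by
    have : ∑ w ∈ img, (S.filter fun j => f j = w).card
        ≤ ∑ w ∈ img, (t + k - gridDist (↑w) v) :=
      Finset.sum_le_sum fun w hw => by have := hfib w hw; omega
    omega
  have h1 : ((1 + 2 * k : ℕ) : ℝ≥0∞)
      ≤ ∑ w ∈ img, ((t + k - gridDist (↑w) v : ℕ) : ℝ≥0∞) := by
    rw [← Nat.cast_sum]
    exact_mod_cast hnat
  calc ((1 + 2 * k : ℕ) : ℝ≥0∞) ≤ ∑ w ∈ img, ((t + k - gridDist (↑w) v : ℕ) : ℝ≥0∞) := h1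
    _ ≤ signal (t + k) T v := ENNReal.sum_le_tsum img
end

section
/- For all integers t ≥ 1 and k ≥ 1, δ_{t,1}(ℤ²) ≥ δ_{t+k, 1+2k}(ℤ²). -/
open scoped ENNReal

lemma key_step (t r : ℕ) (hr : 1 ≤ r) (T : Set (ℤ × ℤ))
    (hT : IsBroadcasting t r T) : IsBroadcasting (t + 1) (r + 2) T := by
  intro v
  have hdecomp : signal (t+1) T v
      = signal t T v + ∑' w : T, (if gridDist (↑w) v ≤ t then (1:ℝ≥0∞) else 0) := by
    rw [signal, signal, ← ENNReal.tsum_add]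
    congr 1; funext w
    split_ifs with h
    · have h1 : (t + 1 - gridDist (↑w) v : ℕ) = (t - gridDist (↑w) v) + 1 := by omega
      rw [h1]; push_cast; ring
    · have h1 : (t + 1 - gridDist (↑w) v : ℕ) = 0 := by omega
      have h2 : (t - gridDist (↑w) v : ℕ) = 0 := by omega
      rw [h1, h2]; simp
  have h0 := hT v
  obtain ⟨w, hw⟩ : ∃ w : T, ((t - gridDist (↑w) v : ℕ) : ℝ≥0∞) ≠ 0 := by
    by_contra h
    push_neg at h
    rw [signal, ENNReal.tsum_eq_zero.mpr h] at h0
    simp at h0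
    omega
  have hwd : gridDist (↑w) v < t := by
    by_contra h
    exact hw (by simp [Nat.sub_eq_zero_of_le (le_of_not_gt h)])
  by_cases hcase : ∃ w' : T, w' ≠ w ∧ gridDist (↑w') v ≤ t
  · -- two towers within distance t : indicator sum ≥ 2
    obtain ⟨w', hne, hw'd⟩ := hcase
    have h2 : (2:ℝ≥0∞) ≤ ∑' u : T, (if gridDist (↑u) v ≤ t then (1:ℝ≥0∞) else 0) := by
      have hsum := ENNReal.sum_le_tsum (f := fun u : T => (if gridDist (↑u) v ≤ t then (1:ℝ≥0∞) else 0)) ({w, w'} : Finset T)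
      rw [Finset.sum_pair (Ne.symm hne)] at hsum
      rw [if_pos hwd.le, if_pos hw'd] at hsum
      rw [one_add_one_eq_two] at hsum; exact hsum
    rw [hdecomp]
    calc ((r + 2 : ℕ) : ℝ≥0∞) = (r : ℝ≥0∞) + 2 := by push_cast; ring
    _ ≤ signal t T v + ∑' u : T, (if gridDist (↑u) v ≤ t then (1:ℝ≥0∞) else 0) :=
        add_le_add h0 h2
  · -- single tower case: use neighbor of v away from w
    push_neg at hcase
    set v' : ℤ × ℤ := if (↑w : ℤ × ℤ).1 ≤ v.1 then (v.1 + 1, v.2) else (v.1 - 1, v.2) with hv'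
    have hdw : gridDist (↑w) v' = gridDist (↑w) v + 1 := by
      rw [hv']; split_ifs with h <;> simp [gridDist] <;> omega
    have hfar : ∀ u : ℤ × ℤ, gridDist u v ≤ gridDist u v' + 1 := by
      intro u
      rw [hv']; split_ifs with h <;> simp [gridDist] <;> omega
    have hsig : signal t T v' = ((t - gridDist (↑w) v' : ℕ) : ℝ≥0∞) := by
      rw [signal]
      apply tsum_eq_single w
      intro w' hne
      have hdist : t + 1 ≤ gridDist (↑w') v := hcase w' hne
      have : t ≤ gridDist (↑w') v' := by
        have := hfar (↑w')
        omega
      simp [Nat.sub_eq_zero_of_le this]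
    have h1 := hT v'
    rw [hsig, hdw] at h1
    have hr1 : r ≤ t - (gridDist (↑w) v + 1) := by exact_mod_cast h1
    have hkey : r + 2 ≤ t + 1 - gridDist (↑w) v := by omega
    calc ((r + 2 : ℕ) : ℝ≥0∞) ≤ ((t + 1 - gridDist (↑w) v : ℕ) : ℝ≥0∞) := by
          exact_mod_cast hkey
    _ ≤ signal (t+1) T v := ENNReal.le_tsum w

lemma broadcast_up (t k : ℕ) (T : Set (ℤ × ℤ))
    (hT : IsBroadcasting t 1 T) : IsBroadcasting (t + k) (1 + 2 * k) T := by
  induction k with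
  | zero => simpa using hT
  | succ n ih =>
      have := key_step (t + n) (1 + 2 * n) (by omega) T ih
      have he : 1 + 2 * (n + 1) = 1 + 2 * n + 2 := by omega
      rw [← add_assoc, he] at *
      exact this


/-- For all `t ≥ 1` and `k ≥ 1`, `δ_{t,1}(ℤ²) ≥ δ_{t+k, 1+2k}(ℤ²)`. -/
theorem deltaGrid_t_one_ge (t k : ℕ) (ht : 1 ≤ t) (hk : 1 ≤ k) :
    deltaGrid (t + k) (1 + 2 * k) ≤ deltaGrid t 1 := by
  refine le_iInf₂ fun T hT => ?_
  exact iInf₂_le T (broadcast_up t k T hT)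
end

section
/- For all integers t ≥ 2 and k ≥ 1, every (t,2)-broadcasting set 𝒯 ⊆ ℤ² is also (t+k, 2+2k)-broadcasting. -/
open scoped ENNReal

lemma gridDist_triangle (a b c : ℤ × ℤ) : gridDist a c ≤ gridDist a b + gridDist b c := by
  simp only [gridDist]
  have h1 := Int.natAbs_add_le (a.1 - b.1) (b.1 - c.1)
  have h2 := Int.natAbs_add_le (a.2 - b.2) (b.2 - c.2)
  have e1 : a.1 - c.1 = (a.1 - b.1) + (b.1 - c.1) := by ring
  have e2 : a.2 - c.2 = (a.2 - b.2) + (b.2 - c.2) := by ring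
  rw [e1, e2]; omega

lemma broadcast_step (t r : ℕ) (ht : 2 ≤ t) (hr : 2 ≤ r) (T : Set (ℤ × ℤ))
    (hT : IsBroadcasting t r T) : IsBroadcasting (t + 1) (r + 2) T := by
  intro v
  by_cases hA : ∃ w₁ w₂ : T, w₁ ≠ w₂ ∧ gridDist ↑w₁ v < t ∧ gridDist ↑w₂ v < t
  · obtain ⟨w₁, w₂, hne, h1, h2⟩ := hA
    have key : signal t T v + 2 ≤ signal (t + 1) T v := by
      have hpt : ∀ x : T, ((t - gridDist ↑x v : ℕ) : ℝ≥0∞)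
          + ((if x = w₁ then (1 : ℝ≥0∞) else 0) + (if x = w₂ then (1 : ℝ≥0∞) else 0))
          ≤ ((t + 1 - gridDist ↑x v : ℕ) : ℝ≥0∞) := by
        intro x
        by_cases e1 : x = w₁
        · subst e1
          rw [if_pos rfl, if_neg hne]
          rw [show t + 1 - gridDist ↑x v = (t - gridDist ↑x v) + 1 from by omega]
          push_cast
          simp
        · by_cases e2 : x = w₂
          · subst e2
            rw [if_pos rfl, if_neg e1]
            rw [show t + 1 - gridDist ↑x v = (t - gridDist ↑x v) + 1 from by omega]
            push_cast
            simp
          · rw [if_neg e1, if_neg e2]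
            simp only [add_zero]
            exact Nat.cast_le.2 (by omega)
      calc signal t T v + 2
          = (∑' x : T, ((t - gridDist ↑x v : ℕ) : ℝ≥0∞))
            + ((∑' x : T, if x = w₁ then (1 : ℝ≥0∞) else 0)
              + (∑' x : T, if x = w₂ then (1 : ℝ≥0∞) else 0)) := by
            rw [tsum_ite_eq, tsum_ite_eq]; norm_num [signal]
        _ = ∑' x : T, (((t - gridDist ↑x v : ℕ) : ℝ≥0∞)
            + ((if x = w₁ then (1 : ℝ≥0∞) else 0) + (if x = w₂ then (1 : ℝ≥0∞) else 0))) := by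
            rw [ENNReal.tsum_add, ENNReal.tsum_add]
        _ ≤ signal (t + 1) T v := ENNReal.tsum_le_tsum hpt
    calc ((r + 2 : ℕ) : ℝ≥0∞) = (r : ℝ≥0∞) + 2 := by push_cast; ring
      _ ≤ signal t T v + 2 := by gcongr; exact hT v
      _ ≤ signal (t + 1) T v := key
  · -- at most one tower within distance < t of v
    have hsig := hT v
    have hpos : signal t T v ≠ 0 := by
      intro h0
      rw [h0] at hsig
      simp at hsig
      omega
    obtain ⟨w, hw⟩ : ∃ w : T, ((t - gridDist ↑w v : ℕ) : ℝ≥0∞) ≠ 0 := by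
      by_contra h
      push_neg at h
      exact hpos (by simpa [signal] using ENNReal.tsum_eq_zero.2 h)
    have hdw : gridDist ↑w v < t := by
      by_contra h
      exact hw (by rw [show t - gridDist ↑w v = 0 from by omega]; simp)
    have huniq : ∀ x : T, x ≠ w → t ≤ gridDist ↑x v := by
      intro x hx
      by_contra h
      exact hA ⟨x, w, hx, by omega, hdw⟩
    have hsingle : signal t T v = ((t - gridDist ↑w v : ℕ) : ℝ≥0∞) := by
      refine tsum_eq_single w fun x hx => ?_
      rw [show t - gridDist ↑x v = 0 from by have := huniq x hx; omega]; simp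
    have hrd : r ≤ t - gridDist ↑w v := by
      rw [hsingle] at hsig
      exact_mod_cast hsig
    have hd : gridDist ↑w v + r ≤ t := by omega
    set u : ℤ × ℤ := (v.1 + (if (↑w : ℤ × ℤ).1 ≤ v.1 then 1 else -1), v.2) with hu
    have huv : gridDist u v = 1 := by
      simp only [gridDist, hu]
      split_ifs <;> simp
    have hwu : gridDist ↑w u = gridDist ↑w v + 1 := by
      simp only [gridDist, hu]
      split_ifs with h <;> omega
    have key : signal t T u + 2 ≤ signal (t + 1) T v := by
      have hpt : ∀ x : T, ((t - gridDist ↑x u : ℕ) : ℝ≥0∞)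
          + (if x = w then (2 : ℝ≥0∞) else 0)
          ≤ ((t + 1 - gridDist ↑x v : ℕ) : ℝ≥0∞) := by
        intro x
        by_cases e : x = w
        · subst e
          rw [if_pos rfl, hwu,
            show t + 1 - gridDist ↑x v = (t - (gridDist ↑x v + 1)) + 2 from by omega]
          push_cast
          simp
        · rw [if_neg e, add_zero]
          have tri := gridDist_triangle ↑x u v
          refine Nat.cast_le.2 ?_
          omega
      calc signal t T u + 2
          = (∑' x : T, ((t - gridDist ↑x u : ℕ) : ℝ≥0∞))
            + (∑' x : T, if x = w then (2 : ℝ≥0∞) else 0) := by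
            rw [tsum_ite_eq]; rfl
        _ = ∑' x : T, (((t - gridDist ↑x u : ℕ) : ℝ≥0∞)
            + (if x = w then (2 : ℝ≥0∞) else 0)) := (ENNReal.tsum_add).symm
        _ ≤ signal (t + 1) T v := ENNReal.tsum_le_tsum hpt
    calc ((r + 2 : ℕ) : ℝ≥0∞) = (r : ℝ≥0∞) + 2 := by push_cast; ring
      _ ≤ signal t T u + 2 := by gcongr; exact hT u
      _ ≤ signal (t + 1) T v := key

/-- Every `(t,2)`-broadcasting set in ℤ² is also `(t+k, 2+2k)`-broadcasting. -/
theorem broadcasting_t_two_to_shifted (t k : ℕ) (ht : 2 ≤ t) (hk : 1 ≤ k)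
    (T : Set (ℤ × ℤ)) (hT : IsBroadcasting t 2 T) :
    IsBroadcasting (t + k) (2 + 2 * k) T := by
  clear hk
  induction k with
  | zero => simpa using hT
  | succ n ih =>
    have h := broadcast_step (t + n) (2 + 2 * n) (by omega) (by omega) T ih
    have e1 : t + (n + 1) = t + n + 1 := by ring
    have e2 : 2 + 2 * (n + 1) = 2 + 2 * n + 2 := by ring
    rw [e1, e2]
    exact h
end

section
/- Let t > k ≥ 1 be integers and let 𝒯* = {(t−1, 0) + m(t−1, −t) + n(t, t−1) : m, n ∈ ℤ} ⊆ ℤ². Let S' = {(x,y) ∈ ℤ² : −k ≤ x ≤ k−1, −(k−1) ≤ y ≤ k}. Then every vertex v ∈ ℤ² that does not lie in any lattice translate m(t−1, −t) + n(t, t−1) + S' (m, n ∈ ℤ) receives, when each tower transmits t+k with per-tower contribution capped at 2k+1, total signal exactly 2k+1; that is, ∑_{T ∈ 𝒯*} min{2k+1, max{t+k − d(T,v), 0}} = 2k+1 for all such v. -/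
/-- ℓ1 (taxicab) distance on the grid ℤ², as an integer. -/
def zDist (u v : ℤ × ℤ) : ℤ := |u.1 - v.1| + |u.2 - v.2|

/-- The lattice of towers `𝒯* = {(t-1, 0) + m (t-1, -t) + n (t, t-1) : m, n ∈ ℤ}`. -/
def towerLattice (t : ℤ) : Set (ℤ × ℤ) :=
  {p : ℤ × ℤ | ∃ m n : ℤ, p = (t - 1 + m * (t - 1) + n * t, m * (-t) + n * (t - 1))}

/-- Total signal received at `v` from towers in `T`, each transmitting strength `s`, with each
tower's contribution capped at `r`. -/
noncomputable def cappedSignal (s r : ℤ) (T : Set (ℤ × ℤ)) (v : ℤ × ℤ) : ℤ :=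
  ∑ᶠ w ∈ T, min r (max (s - zDist w v) 0)

set_option maxHeartbeats 4000000

private lemma round_bound (u N : ℤ) (hN : 0 < N) :
    2 * |u - ((2*u + N) / (2*N)) * N| ≤ N := by
  have hdm := Int.mul_ediv_add_emod (2*u + N) (2*N)
  have h1 : 0 ≤ (2*u + N) % (2*N) := Int.emod_nonneg _ (by omega)
  have h2 : (2*u + N) % (2*N) < 2*N := Int.emod_lt_of_pos _ (by omega)
  set q := (2*u + N) / (2*N) with hq
  set r := (2*u + N) % (2*N) with hr
  have key : 2*(u - q*N) = r - N := by linarith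
  rcases abs_cases (u - q*N) with ⟨heq, _⟩ | ⟨heq, _⟩ <;> rw [heq] <;> linarith

private lemma step (t x y : ℤ) (ht : 2 ≤ t) (hb : |x| + |y| ≤ 2*t - 1) :
    ∃ p q : ℤ, |x - (p*(t-1) + q*t)| + |y - (p*(-t) + q*(t-1))| ≤ t - 1 := by
  rw [Int.abs_eq_natAbs, Int.abs_eq_natAbs] at hb
  rcases le_total 0 x with hx | hx <;> rcases le_total 0 y with hy | hy
  · rcases le_total y x with hc | hc
    · -- O1 : 0 ≤ y ≤ x : candidates (0,0), (0,1), (1,1)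
      have h : ((x.natAbs : ℤ) + (y.natAbs : ℤ) ≤ t-1)
          ∨ (((x-t).natAbs : ℤ) + ((y-(t-1)).natAbs : ℤ) ≤ t-1)
          ∨ (((x-(2*t-1)).natAbs : ℤ) + ((y+1).natAbs : ℤ) ≤ t-1) := by omega
      rcases h with h | h | h
      · exact ⟨0, 0, by rw [Int.abs_eq_natAbs, Int.abs_eq_natAbs]; omega⟩
      · exact ⟨0, 1, by rw [Int.abs_eq_natAbs, Int.abs_eq_natAbs]; omega⟩
      · exact ⟨1, 1, by rw [Int.abs_eq_natAbs, Int.abs_eq_natAbs]; omega⟩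
    · -- O2 : 0 ≤ x ≤ y : candidates (0,0), (0,1), (-1,0), (-1,1)
      have h : ((x.natAbs : ℤ) + (y.natAbs : ℤ) ≤ t-1)
          ∨ (((x-t).natAbs : ℤ) + ((y-(t-1)).natAbs : ℤ) ≤ t-1)
          ∨ (((x+(t-1)).natAbs : ℤ) + ((y-t).natAbs : ℤ) ≤ t-1)
          ∨ (((x-1).natAbs : ℤ) + ((y-(2*t-1)).natAbs : ℤ) ≤ t-1) := by omega
      rcases h with h | h | h | h
      · exact ⟨0, 0, by rw [Int.abs_eq_natAbs, Int.abs_eq_natAbs]; omega⟩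
      · exact ⟨0, 1, by rw [Int.abs_eq_natAbs, Int.abs_eq_natAbs]; omega⟩
      · exact ⟨-1, 0, by rw [Int.abs_eq_natAbs, Int.abs_eq_natAbs]; omega⟩
      · exact ⟨-1, 1, by rw [Int.abs_eq_natAbs, Int.abs_eq_natAbs]; omega⟩
  · rcases le_total (-y) x with hc | hc
    · -- O8 : 0 ≤ -y ≤ x : candidates (0,0), (1,0), (0,1), (1,1)
      have h : ((x.natAbs : ℤ) + (y.natAbs : ℤ) ≤ t-1)
          ∨ (((x-(t-1)).natAbs : ℤ) + ((y+t).natAbs : ℤ) ≤ t-1)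
          ∨ (((x-t).natAbs : ℤ) + ((y-(t-1)).natAbs : ℤ) ≤ t-1)
          ∨ (((x-(2*t-1)).natAbs : ℤ) + ((y+1).natAbs : ℤ) ≤ t-1) := by omega
      rcases h with h | h | h | h
      · exact ⟨0, 0, by rw [Int.abs_eq_natAbs, Int.abs_eq_natAbs]; omega⟩
      · exact ⟨1, 0, by rw [Int.abs_eq_natAbs, Int.abs_eq_natAbs]; omega⟩
      · exact ⟨0, 1, by rw [Int.abs_eq_natAbs, Int.abs_eq_natAbs]; omega⟩
      · exact ⟨1, 1, by rw [Int.abs_eq_natAbs, Int.abs_eq_natAbs]; omega⟩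
    · -- O7 : y ≤ 0 ≤ x ≤ -y : candidates (0,0), (1,0), (1,-1)
      have h : ((x.natAbs : ℤ) + (y.natAbs : ℤ) ≤ t-1)
          ∨ (((x-(t-1)).natAbs : ℤ) + ((y+t).natAbs : ℤ) ≤ t-1)
          ∨ (((x+1).natAbs : ℤ) + ((y+(2*t-1)).natAbs : ℤ) ≤ t-1) := by omega
      rcases h with h | h | h
      · exact ⟨0, 0, by rw [Int.abs_eq_natAbs, Int.abs_eq_natAbs]; omega⟩
      · exact ⟨1, 0, by rw [Int.abs_eq_natAbs, Int.abs_eq_natAbs]; omega⟩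
      · exact ⟨1, -1, by rw [Int.abs_eq_natAbs, Int.abs_eq_natAbs]; omega⟩
  · rcases le_total y (-x) with hc | hc
    · -- O4 : x ≤ 0, 0 ≤ y ≤ -x : candidates (0,0), (-1,0), (0,-1), (-1,-1)
      have h : ((x.natAbs : ℤ) + (y.natAbs : ℤ) ≤ t-1)
          ∨ (((x+(t-1)).natAbs : ℤ) + ((y-t).natAbs : ℤ) ≤ t-1)
          ∨ (((x+t).natAbs : ℤ) + ((y+(t-1)).natAbs : ℤ) ≤ t-1)
          ∨ (((x+(2*t-1)).natAbs : ℤ) + ((y-1).natAbs : ℤ) ≤ t-1) := by omega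
      rcases h with h | h | h | h
      · exact ⟨0, 0, by rw [Int.abs_eq_natAbs, Int.abs_eq_natAbs]; omega⟩
      · exact ⟨-1, 0, by rw [Int.abs_eq_natAbs, Int.abs_eq_natAbs]; omega⟩
      · exact ⟨0, -1, by rw [Int.abs_eq_natAbs, Int.abs_eq_natAbs]; omega⟩
      · exact ⟨-1, -1, by rw [Int.abs_eq_natAbs, Int.abs_eq_natAbs]; omega⟩
    · -- O3 : x ≤ 0 ≤ -x ≤ y : candidates (0,0), (-1,0), (-1,1)
      have h : ((x.natAbs : ℤ) + (y.natAbs : ℤ) ≤ t-1)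
          ∨ (((x+(t-1)).natAbs : ℤ) + ((y-t).natAbs : ℤ) ≤ t-1)
          ∨ (((x-1).natAbs : ℤ) + ((y-(2*t-1)).natAbs : ℤ) ≤ t-1) := by omega
      rcases h with h | h | h
      · exact ⟨0, 0, by rw [Int.abs_eq_natAbs, Int.abs_eq_natAbs]; omega⟩
      · exact ⟨-1, 0, by rw [Int.abs_eq_natAbs, Int.abs_eq_natAbs]; omega⟩
      · exact ⟨-1, 1, by rw [Int.abs_eq_natAbs, Int.abs_eq_natAbs]; omega⟩
  · rcases le_total x y with hc | hc
    · -- O5 : x ≤ y ≤ 0 : candidates (0,0), (0,-1), (-1,-1)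
      have h : ((x.natAbs : ℤ) + (y.natAbs : ℤ) ≤ t-1)
          ∨ (((x+t).natAbs : ℤ) + ((y+(t-1)).natAbs : ℤ) ≤ t-1)
          ∨ (((x+(2*t-1)).natAbs : ℤ) + ((y-1).natAbs : ℤ) ≤ t-1) := by omega
      rcases h with h | h | h
      · exact ⟨0, 0, by rw [Int.abs_eq_natAbs, Int.abs_eq_natAbs]; omega⟩
      · exact ⟨0, -1, by rw [Int.abs_eq_natAbs, Int.abs_eq_natAbs]; omega⟩
      · exact ⟨-1, -1, by rw [Int.abs_eq_natAbs, Int.abs_eq_natAbs]; omega⟩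
    · -- O6 : y ≤ x ≤ 0 : candidates (0,0), (0,-1), (1,0), (1,-1)
      have h : ((x.natAbs : ℤ) + (y.natAbs : ℤ) ≤ t-1)
          ∨ (((x+t).natAbs : ℤ) + ((y+(t-1)).natAbs : ℤ) ≤ t-1)
          ∨ (((x-(t-1)).natAbs : ℤ) + ((y+t).natAbs : ℤ) ≤ t-1)
          ∨ (((x+1).natAbs : ℤ) + ((y+(2*t-1)).natAbs : ℤ) ≤ t-1) := by omega
      rcases h with h | h | h | h
      · exact ⟨0, 0, by rw [Int.abs_eq_natAbs, Int.abs_eq_natAbs]; omega⟩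
      · exact ⟨0, -1, by rw [Int.abs_eq_natAbs, Int.abs_eq_natAbs]; omega⟩
      · exact ⟨1, 0, by rw [Int.abs_eq_natAbs, Int.abs_eq_natAbs]; omega⟩
      · exact ⟨1, -1, by rw [Int.abs_eq_natAbs, Int.abs_eq_natAbs]; omega⟩

private lemma cover (t : ℤ) (ht : 2 ≤ t) (v : ℤ × ℤ) :
    ∃ m n : ℤ, |v.1 - (t - 1 + m * (t-1) + n * t)| + |v.2 - (m * (-t) + n * (t-1))| ≤ t - 1 := by
  set N : ℤ := 2*t*t - 2*t + 1 with hN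
  have hNpos : 0 < N := by nlinarith
  set a : ℤ := v.1 - (t - 1) with ha
  set b : ℤ := v.2 with hb
  set u : ℤ := (t-1)*a - t*b with hu
  set w : ℤ := t*a + (t-1)*b with hw
  set m : ℤ := (2*u + N) / (2*N) with hm
  set n : ℤ := (2*w + N) / (2*N) with hn
  have hα := round_bound u N hNpos
  have hβ := round_bound w N hNpos
  set α : ℤ := u - m*N with hα'
  set β : ℤ := w - n*N with hβ'
  set X : ℤ := a - (m*(t-1) + n*t) with hX
  set Y : ℤ := b - (m*(-t) + n*(t-1)) with hY
  have k1 : N * X = α*(t-1) + β*t := by rw [hX, hα', hβ', hu, hw, hN]; ring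
  have k2 : N * Y = -(α*t) + β*(t-1) := by rw [hY, hα', hβ', hu, hw, hN]; ring
  -- bound |X| + |Y| ≤ 2t - 1
  have hb1 : N * |X| ≤ |α| *(t-1) + |β| *t := by
    calc N * |X| = |N * X| := by
          rw [abs_mul, abs_of_pos hNpos]
      _ = |α*(t-1) + β*t| := by rw [k1]
      _ ≤ |α*(t-1)| + |β*t| := abs_add_le _ _
      _ = |α| *(t-1) + |β| *t := by
          rw [abs_mul, abs_mul, abs_of_nonneg (by omega : (0:ℤ) ≤ t-1),
            abs_of_nonneg (by omega : (0:ℤ) ≤ t)]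
  have hb2 : N * |Y| ≤ |α| *t + |β| *(t-1) := by
    calc N * |Y| = |N * Y| := by rw [abs_mul, abs_of_pos hNpos]
      _ = |-(α*t) + β*(t-1)| := by rw [k2]
      _ ≤ |-(α*t)| + |β*(t-1)| := abs_add_le _ _
      _ = |α| *t + |β| *(t-1) := by
          rw [abs_neg, abs_mul, abs_mul, abs_of_nonneg (by omega : (0:ℤ) ≤ t-1),
            abs_of_nonneg (by omega : (0:ℤ) ≤ t)]
  have hXY : |X| + |Y| ≤ 2*t - 1 := by
    have h1 : N * (|X| + |Y|) ≤ (|α| + |β|) * (2*t-1) := by nlinarith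
    have h2 : (|α| + |β|) * (2*t-1) ≤ N * (2*t-1) := by nlinarith [abs_nonneg α, abs_nonneg β]
    have := le_trans h1 h2
    exact le_of_mul_le_mul_left this hNpos
  obtain ⟨p, q, hpq⟩ := step t X Y ht hXY
  refine ⟨m + p, n + q, ?_⟩
  have e1 : v.1 - (t - 1 + (m+p) * (t-1) + (n+q) * t) = X - (p*(t-1) + q*t) := by
    rw [hX, ha]; ring
  have e2 : v.2 - ((m+p) * (-t) + (n+q) * (t-1)) = Y - (p*(-t) + q*(t-1)) := by
    rw [hY, hb]; ring
  rw [e1, e2]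
  exact hpq

private lemma normLB (t P Q : ℤ) (ht : 2 ≤ t) (h : 2 ≤ |P| ∨ 2 ≤ |Q|) :
    4*t - 3 ≤ |P*(t-1) + Q*t| + |P*(-t) + Q*(t-1)| := by
  set A := P*(t-1) + Q*t with hA
  set B := P*(-t) + Q*(t-1) with hB
  have hN : (0:ℤ) < 2*t*t - 2*t + 1 := by nlinarith
  have b1 : |t*A + (t-1)*B| ≤ t * (|A| + |B|) := by
    calc |t*A + (t-1)*B| ≤ |t*A| + |(t-1)*B| := abs_add_le _ _
      _ = t * |A| + (t-1) * |B| := by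
          rw [abs_mul, abs_mul, abs_of_nonneg (by omega : (0:ℤ) ≤ t),
            abs_of_nonneg (by omega : (0:ℤ) ≤ t-1)]
      _ ≤ t * (|A| + |B|) := by nlinarith [abs_nonneg B]
  have b2 : |(t-1)*A - t*B| ≤ t * (|A| + |B|) := by
    calc |(t-1)*A - t*B| ≤ |(t-1)*A| + |t*B| := abs_sub _ _
      _ = (t-1) * |A| + t * |B| := by
          rw [abs_mul, abs_mul, abs_of_nonneg (by omega : (0:ℤ) ≤ t),
            abs_of_nonneg (by omega : (0:ℤ) ≤ t-1)]
      _ ≤ t * (|A| + |B|) := by nlinarith [abs_nonneg A]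
  have h1 : |Q| * (2*t*t - 2*t + 1) = |t*A + (t-1)*B| := by
    rw [show t*A + (t-1)*B = Q*(2*t*t - 2*t + 1) from by rw [hA, hB]; ring, abs_mul,
      abs_of_pos hN]
  have h2 : |P| * (2*t*t - 2*t + 1) = |(t-1)*A - t*B| := by
    rw [show (t-1)*A - t*B = P*(2*t*t - 2*t + 1) from by rw [hA, hB]; ring, abs_mul,
      abs_of_pos hN]
  by_contra hcon
  push_neg at hcon
  have hS : |A| + |B| ≤ 4*t - 4 := by omega
  have hT : t * (|A| + |B|) ≤ t * (4*t - 4) := by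
    exact mul_le_mul_of_nonneg_left hS (by omega)
  rcases h with hh | hh
  · nlinarith
  · nlinarith

private lemma quad1 (t k x y : ℤ) (hk : 1 ≤ k) (hkt : k < t)
    (hx : 0 ≤ x) (hy : 0 ≤ y) (hb : x + y ≤ t - 1)
    (e1 : ¬((-k ≤ x - t ∧ x - t ≤ k-1) ∧ (-(k-1) ≤ y + 1 ∧ y + 1 ≤ k)))
    (e2 : ¬((-k ≤ x - 1 ∧ x - 1 ≤ k-1) ∧ (-(k-1) ≤ y - (t-1) ∧ y - (t-1) ≤ k))) :
    min (2*k+1) (max (t+k - (|x + (2*t-1)| + |y - 1|)) 0)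
    + min (2*k+1) (max (t+k - (|x + (t-1)| + |y - t|)) 0)
    + min (2*k+1) (max (t+k - (|x - 1| + |y - (2*t-1)|)) 0)
    + min (2*k+1) (max (t+k - (|x + t| + |y + (t-1)|)) 0)
    + min (2*k+1) (max (t+k - (|x| + |y|)) 0)
    + min (2*k+1) (max (t+k - (|x - t| + |y - (t-1)|)) 0)
    + min (2*k+1) (max (t+k - (|x + 1| + |y + (2*t-1)|)) 0)
    + min (2*k+1) (max (t+k - (|x - (t-1)| + |y + t|)) 0)
    + min (2*k+1) (max (t+k - (|x - (2*t-1)| + |y + 1|)) 0) = 2*k+1 := by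
  rw [abs_of_nonneg hx,
    abs_of_nonneg hy,
    abs_of_nonneg (show (0:ℤ) ≤ y + 1 by omega),
    abs_of_nonneg (show (0:ℤ) ≤ x + 1 by omega),
    abs_of_nonpos (show x - (t-1) ≤ 0 by omega),
    abs_of_nonneg (show (0:ℤ) ≤ y + t by omega),
    abs_of_nonneg (show (0:ℤ) ≤ x + (t-1) by omega),
    abs_of_nonpos (show y - t ≤ 0 by omega),
    abs_of_nonpos (show x - t ≤ 0 by omega),
    abs_of_nonpos (show y - (t-1) ≤ 0 by omega),
    abs_of_nonneg (show (0:ℤ) ≤ x + t by omega),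
    abs_of_nonneg (show (0:ℤ) ≤ y + (t-1) by omega),
    abs_of_nonpos (show x - (2*t-1) ≤ 0 by omega),
    abs_of_nonneg (show (0:ℤ) ≤ x + (2*t-1) by omega),
    abs_of_nonneg (show (0:ℤ) ≤ y + (2*t-1) by omega),
    abs_of_nonpos (show y - (2*t-1) ≤ 0 by omega),
    Int.abs_eq_natAbs (x - 1),
    Int.abs_eq_natAbs (y - 1)]
  omega

private lemma quad2 (t k x y : ℤ) (hk : 1 ≤ k) (hkt : k < t)
    (hx : x ≤ 0) (hy : 0 ≤ y) (hb : -x + y ≤ t - 1)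
    (e1 : ¬((-k ≤ x - 1 ∧ x - 1 ≤ k-1) ∧ (-(k-1) ≤ y - (t-1) ∧ y - (t-1) ≤ k)))
    (e2 : ¬((-k ≤ x + (t-1) ∧ x + (t-1) ≤ k-1) ∧ (-(k-1) ≤ y ∧ y ≤ k))) :
    min (2*k+1) (max (t+k - (|x + (2*t-1)| + |y - 1|)) 0)
    + min (2*k+1) (max (t+k - (|x + (t-1)| + |y - t|)) 0)
    + min (2*k+1) (max (t+k - (|x - 1| + |y - (2*t-1)|)) 0)
    + min (2*k+1) (max (t+k - (|x + t| + |y + (t-1)|)) 0)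
    + min (2*k+1) (max (t+k - (|x| + |y|)) 0)
    + min (2*k+1) (max (t+k - (|x - t| + |y - (t-1)|)) 0)
    + min (2*k+1) (max (t+k - (|x + 1| + |y + (2*t-1)|)) 0)
    + min (2*k+1) (max (t+k - (|x - (t-1)| + |y + t|)) 0)
    + min (2*k+1) (max (t+k - (|x - (2*t-1)| + |y + 1|)) 0) = 2*k+1 := by
  rw [abs_of_nonpos hx,
    abs_of_nonneg hy,
    abs_of_nonneg (show (0:ℤ) ≤ y + 1 by omega),
    abs_of_nonpos (show x - 1 ≤ 0 by omega),
    abs_of_nonpos (show x - (t-1) ≤ 0 by omega),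
    abs_of_nonneg (show (0:ℤ) ≤ y + t by omega),
    abs_of_nonneg (show (0:ℤ) ≤ x + (t-1) by omega),
    abs_of_nonpos (show y - t ≤ 0 by omega),
    abs_of_nonpos (show x - t ≤ 0 by omega),
    abs_of_nonpos (show y - (t-1) ≤ 0 by omega),
    abs_of_nonneg (show (0:ℤ) ≤ x + t by omega),
    abs_of_nonneg (show (0:ℤ) ≤ y + (t-1) by omega),
    abs_of_nonpos (show x - (2*t-1) ≤ 0 by omega),
    abs_of_nonneg (show (0:ℤ) ≤ x + (2*t-1) by omega),
    abs_of_nonneg (show (0:ℤ) ≤ y + (2*t-1) by omega),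
    abs_of_nonpos (show y - (2*t-1) ≤ 0 by omega),
    Int.abs_eq_natAbs (x + 1),
    Int.abs_eq_natAbs (y - 1)]
  omega

private lemma quad3 (t k x y : ℤ) (hk : 1 ≤ k) (hkt : k < t)
    (hx : x ≤ 0) (hy : y ≤ 0) (hb : -x - y ≤ t - 1)
    (e1 : ¬((-k ≤ x + (t-1) ∧ x + (t-1) ≤ k-1) ∧ (-(k-1) ≤ y ∧ y ≤ k)))
    (e2 : ¬((-k ≤ x ∧ x ≤ k-1) ∧ (-(k-1) ≤ y + t ∧ y + t ≤ k))) :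
    min (2*k+1) (max (t+k - (|x + (2*t-1)| + |y - 1|)) 0)
    + min (2*k+1) (max (t+k - (|x + (t-1)| + |y - t|)) 0)
    + min (2*k+1) (max (t+k - (|x - 1| + |y - (2*t-1)|)) 0)
    + min (2*k+1) (max (t+k - (|x + t| + |y + (t-1)|)) 0)
    + min (2*k+1) (max (t+k - (|x| + |y|)) 0)
    + min (2*k+1) (max (t+k - (|x - t| + |y - (t-1)|)) 0)
    + min (2*k+1) (max (t+k - (|x + 1| + |y + (2*t-1)|)) 0)
    + min (2*k+1) (max (t+k - (|x - (t-1)| + |y + t|)) 0)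
    + min (2*k+1) (max (t+k - (|x - (2*t-1)| + |y + 1|)) 0) = 2*k+1 := by
  rw [abs_of_nonpos hx,
    abs_of_nonpos hy,
    abs_of_nonpos (show y - 1 ≤ 0 by omega),
    abs_of_nonpos (show x - 1 ≤ 0 by omega),
    abs_of_nonpos (show x - (t-1) ≤ 0 by omega),
    abs_of_nonneg (show (0:ℤ) ≤ y + t by omega),
    abs_of_nonneg (show (0:ℤ) ≤ x + (t-1) by omega),
    abs_of_nonpos (show y - t ≤ 0 by omega),
    abs_of_nonpos (show x - t ≤ 0 by omega),
    abs_of_nonpos (show y - (t-1) ≤ 0 by omega),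
    abs_of_nonneg (show (0:ℤ) ≤ x + t by omega),
    abs_of_nonneg (show (0:ℤ) ≤ y + (t-1) by omega),
    abs_of_nonpos (show x - (2*t-1) ≤ 0 by omega),
    abs_of_nonneg (show (0:ℤ) ≤ x + (2*t-1) by omega),
    abs_of_nonneg (show (0:ℤ) ≤ y + (2*t-1) by omega),
    abs_of_nonpos (show y - (2*t-1) ≤ 0 by omega),
    Int.abs_eq_natAbs (x + 1),
    Int.abs_eq_natAbs (y + 1)]
  omega

private lemma quad4 (t k x y : ℤ) (hk : 1 ≤ k) (hkt : k < t)
    (hx : 0 ≤ x) (hy : y ≤ 0) (hb : x - y ≤ t - 1)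
    (e1 : ¬((-k ≤ x ∧ x ≤ k-1) ∧ (-(k-1) ≤ y + t ∧ y + t ≤ k)))
    (e2 : ¬((-k ≤ x - t ∧ x - t ≤ k-1) ∧ (-(k-1) ≤ y + 1 ∧ y + 1 ≤ k))) :
    min (2*k+1) (max (t+k - (|x + (2*t-1)| + |y - 1|)) 0)
    + min (2*k+1) (max (t+k - (|x + (t-1)| + |y - t|)) 0)
    + min (2*k+1) (max (t+k - (|x - 1| + |y - (2*t-1)|)) 0)
    + min (2*k+1) (max (t+k - (|x + t| + |y + (t-1)|)) 0)
    + min (2*k+1) (max (t+k - (|x| + |y|)) 0)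
    + min (2*k+1) (max (t+k - (|x - t| + |y - (t-1)|)) 0)
    + min (2*k+1) (max (t+k - (|x + 1| + |y + (2*t-1)|)) 0)
    + min (2*k+1) (max (t+k - (|x - (t-1)| + |y + t|)) 0)
    + min (2*k+1) (max (t+k - (|x - (2*t-1)| + |y + 1|)) 0) = 2*k+1 := by
  rw [abs_of_nonneg hx,
    abs_of_nonpos hy,
    abs_of_nonpos (show y - 1 ≤ 0 by omega),
    abs_of_nonneg (show (0:ℤ) ≤ x + 1 by omega),
    abs_of_nonpos (show x - (t-1) ≤ 0 by omega),
    abs_of_nonneg (show (0:ℤ) ≤ y + t by omega),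
    abs_of_nonneg (show (0:ℤ) ≤ x + (t-1) by omega),
    abs_of_nonpos (show y - t ≤ 0 by omega),
    abs_of_nonpos (show x - t ≤ 0 by omega),
    abs_of_nonpos (show y - (t-1) ≤ 0 by omega),
    abs_of_nonneg (show (0:ℤ) ≤ x + t by omega),
    abs_of_nonneg (show (0:ℤ) ≤ y + (t-1) by omega),
    abs_of_nonpos (show x - (2*t-1) ≤ 0 by omega),
    abs_of_nonneg (show (0:ℤ) ≤ x + (2*t-1) by omega),
    abs_of_nonneg (show (0:ℤ) ≤ y + (2*t-1) by omega),
    abs_of_nonpos (show y - (2*t-1) ≤ 0 by omega),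
    Int.abs_eq_natAbs (x - 1),
    Int.abs_eq_natAbs (y + 1)]
  omega

private lemma key (t k x y : ℤ) (hk : 1 ≤ k) (hkt : k < t) (hb : |x| + |y| ≤ t - 1)
    (E : ∀ p q : ℤ, ¬((-k ≤ x + (t-1) - (p*(t-1) + q*t) ∧ x + (t-1) - (p*(t-1) + q*t) ≤ k-1) ∧
        (-(k-1) ≤ y - (p*(-t) + q*(t-1)) ∧ y - (p*(-t) + q*(t-1)) ≤ k))) :
    min (2*k+1) (max (t+k - (|x + (2*t-1)| + |y - 1|)) 0)
    + min (2*k+1) (max (t+k - (|x + (t-1)| + |y - t|)) 0)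
    + min (2*k+1) (max (t+k - (|x - 1| + |y - (2*t-1)|)) 0)
    + min (2*k+1) (max (t+k - (|x + t| + |y + (t-1)|)) 0)
    + min (2*k+1) (max (t+k - (|x| + |y|)) 0)
    + min (2*k+1) (max (t+k - (|x - t| + |y - (t-1)|)) 0)
    + min (2*k+1) (max (t+k - (|x + 1| + |y + (2*t-1)|)) 0)
    + min (2*k+1) (max (t+k - (|x - (t-1)| + |y + t|)) 0)
    + min (2*k+1) (max (t+k - (|x - (2*t-1)| + |y + 1|)) 0) = 2*k+1 := by
  rcases le_total 0 x with hx | hx <;> rcases le_total 0 y with hy | hy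
  · rw [abs_of_nonneg hx, abs_of_nonneg hy] at hb
    exact quad1 t k x y hk hkt hx hy hb (by have := E 1 1; omega) (by have := E 0 1; omega)
  · rw [abs_of_nonneg hx, abs_of_nonpos hy] at hb
    exact quad4 t k x y hk hkt hx hy (by omega) (by have := E 1 0; omega) (by have := E 1 1; omega)
  · rw [abs_of_nonpos hx, abs_of_nonneg hy] at hb
    exact quad2 t k x y hk hkt hx hy (by omega) (by have := E 0 1; omega) (by have := E 0 0; omega)
  · rw [abs_of_nonpos hx, abs_of_nonpos hy] at hb
    exact quad3 t k x y hk hkt hx hy (by omega) (by have := E 0 0; omega) (by have := E 1 0; omega)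

private lemma g_inj (t : ℤ) (ht : 2 ≤ t) :
    Function.Injective (fun p : ℤ × ℤ =>
      ((t - 1 + p.1 * (t - 1) + p.2 * t, p.1 * (-t) + p.2 * (t - 1)) : ℤ × ℤ)) := by
  rintro ⟨m, n⟩ ⟨m', n'⟩ h
  simp only [Prod.mk.injEq] at h
  obtain ⟨h1, h2⟩ := h
  have hq : (n - n') * (2*t*t - 2*t + 1) = 0 := by linear_combination t * h1 + (t-1) * h2
  have hN : (0:ℤ) < 2*t*t - 2*t + 1 := by nlinarith
  have hn : n = n' := by
    rcases mul_eq_zero.1 hq with h | h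
    · omega
    · omega
  have hm : m = m' := by
    subst hn
    have : (m - m') * (t - 1) = 0 := by linear_combination h1
    rcases mul_eq_zero.1 this with h | h
    · omega
    · omega
  simp [hm, hn]

/-- Let `t > k ≥ 1`. Every vertex `v ∈ ℤ²` not lying in any lattice translate
`m (t-1, -t) + n (t, t-1) + S'` of the square `S' = [-k, k-1] × [-(k-1), k]` receives,
when each tower of `𝒯*` transmits `t + k` with per-tower contribution capped at `2k+1`,
total signal exactly `2k+1`. -/
theorem signal_outside_translates (t k : ℕ) (hk : 1 ≤ k) (hkt : k < t) (v : ℤ × ℤ)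
    (hv : ¬ ∃ m n : ℤ,
        (-(k : ℤ) ≤ v.1 - (m * ((t : ℤ) - 1) + n * t) ∧
          v.1 - (m * ((t : ℤ) - 1) + n * t) ≤ (k : ℤ) - 1) ∧
        (-((k : ℤ) - 1) ≤ v.2 - (m * (-(t : ℤ)) + n * ((t : ℤ) - 1)) ∧
          v.2 - (m * (-(t : ℤ)) + n * ((t : ℤ) - 1)) ≤ (k : ℤ))) :
    cappedSignal ((t : ℤ) + k) (2 * k + 1) (towerLattice t) v = 2 * (k : ℤ) + 1 := by
  have htZ : (2:ℤ) ≤ (t:ℤ) := by exact_mod_cast (show 2 ≤ t by omega)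
  have hkZ : (1:ℤ) ≤ (k:ℤ) := by exact_mod_cast hk
  have hktZ : (k:ℤ) < (t:ℤ) := by exact_mod_cast hkt
  obtain ⟨m₀, n₀, hc⟩ := cover (t:ℤ) htZ v
  set x := v.1 - ((t:ℤ) - 1 + m₀ * ((t:ℤ) - 1) + n₀ * (t:ℤ)) with hx
  set y := v.2 - (m₀ * (-(t:ℤ)) + n₀ * ((t:ℤ) - 1)) with hy
  have hb : |x| + |y| ≤ (t:ℤ) - 1 := by
    first
    | exact hc
    | · rw [hx, hy]; exact hc
  have E : ∀ p q : ℤ,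
      ¬((-(k:ℤ) ≤ x + ((t:ℤ)-1) - (p*((t:ℤ)-1) + q*(t:ℤ)) ∧
          x + ((t:ℤ)-1) - (p*((t:ℤ)-1) + q*(t:ℤ)) ≤ (k:ℤ)-1) ∧
        (-((k:ℤ)-1) ≤ y - (p*(-(t:ℤ)) + q*((t:ℤ)-1)) ∧
          y - (p*(-(t:ℤ)) + q*((t:ℤ)-1)) ≤ (k:ℤ))) := by
    intro p q hpq
    apply hv
    refine ⟨m₀ + p, n₀ + q, ?_⟩
    have g1 : v.1 - ((m₀+p) * ((t:ℤ) - 1) + (n₀+q) * (t:ℤ))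
        = x + ((t:ℤ)-1) - (p*((t:ℤ)-1) + q*(t:ℤ)) := by rw [hx]; ring
    have g2 : v.2 - ((m₀+p) * (-(t:ℤ)) + (n₀+q) * ((t:ℤ)-1))
        = y - (p*(-(t:ℤ)) + q*((t:ℤ)-1)) := by rw [hy]; ring
    rw [g1, g2]
    exact hpq
  unfold cappedSignal
  have hTL : towerLattice (t:ℤ) = Set.range (fun p : ℤ × ℤ =>
      (((t:ℤ) - 1 + p.1 * ((t:ℤ) - 1) + p.2 * (t:ℤ),
        p.1 * (-(t:ℤ)) + p.2 * ((t:ℤ) - 1)) : ℤ × ℤ)) := by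
    ext w
    constructor
    · rintro ⟨m, n, h⟩; exact ⟨(m, n), h.symm⟩
    · rintro ⟨⟨m, n⟩, h⟩; exact ⟨m, n, h.symm⟩
  rw [hTL, finsum_mem_range (g_inj (t:ℤ) htZ)]
  simp only [zDist]

  have hsupp : Function.support (fun j : ℤ × ℤ => min (2*(k:ℤ)+1) (max ((t:ℤ)+(k:ℤ) - (|(t:ℤ) - 1 + j.1 * ((t:ℤ) - 1) + j.2 * (t:ℤ) - v.1| + |j.1 * (-(t:ℤ)) + j.2 * ((t:ℤ) - 1) - v.2|)) 0)) ⊆ ↑(({((m₀-1), (n₀-1)), ((m₀-1), (n₀)), ((m₀-1), (n₀+1)), ((m₀), (n₀-1)), ((m₀), (n₀)), ((m₀), (n₀+1)), ((m₀+1), (n₀-1)), ((m₀+1), (n₀)), ((m₀+1), (n₀+1))} : Finset (ℤ × ℤ))) := by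
    intro p hp
    obtain ⟨m, n⟩ := p
    simp only [Function.mem_support] at hp
    set A := |(t:ℤ) - 1 + (m) * ((t:ℤ) - 1) + (n) * (t:ℤ) - v.1| + |(m) * (-(t:ℤ)) + (n) * ((t:ℤ) - 1) - v.2| with hA
    have hd : A ≤ (t:ℤ) + (k:ℤ) - 1 := by
      by_contra hcon
      apply hp
      have h0 : max ((t:ℤ) + (k:ℤ) - A) 0 = 0 := max_eq_right (by omega)
      rw [h0]
      exact min_eq_right (by omega)
    have a1 : (m - m₀) * ((t:ℤ)-1) + (n - n₀) * (t:ℤ) = ((t:ℤ) - 1 + (m) * ((t:ℤ) - 1) + (n) * (t:ℤ) - v.1) + x := by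
      rw [hx]; ring
    have b1 : |(m - m₀) * ((t:ℤ)-1) + (n - n₀) * (t:ℤ)| ≤ |(t:ℤ) - 1 + (m) * ((t:ℤ) - 1) + (n) * (t:ℤ) - v.1| + |x| := by
      rw [a1]; exact abs_add_le _ _
    have a2 : (m - m₀) * (-(t:ℤ)) + (n - n₀) * ((t:ℤ)-1) = ((m) * (-(t:ℤ)) + (n) * ((t:ℤ) - 1) - v.2) + y := by
      rw [hy]; ring
    have b2 : |(m - m₀) * (-(t:ℤ)) + (n - n₀) * ((t:ℤ)-1)| ≤ |(m) * (-(t:ℤ)) + (n) * ((t:ℤ) - 1) - v.2| + |y| := by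
      rw [a2]; exact abs_add_le _ _
    have hin : m₀ - 1 ≤ m ∧ m ≤ m₀ + 1 ∧ n₀ - 1 ≤ n ∧ n ≤ n₀ + 1 := by
      by_contra hcon2
      have h2 : 2 ≤ |m - m₀| ∨ 2 ≤ |n - n₀| := by
        rw [Int.abs_eq_natAbs, Int.abs_eq_natAbs]; omega
      have hLB := normLB (t:ℤ) (m - m₀) (n - n₀) htZ h2
      linarith
    simp only [Finset.coe_insert, Set.mem_insert_iff, Finset.coe_singleton,
      Set.mem_singleton_iff, Prod.mk.injEq]
    omega
  rw [finsum_eq_finset_sum_of_support_subset _ hsupp]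
  rw [Finset.sum_insert (by simp only [Finset.mem_insert, Finset.mem_singleton, Prod.mk.injEq]; omega)]
  rw [Finset.sum_insert (by simp only [Finset.mem_insert, Finset.mem_singleton, Prod.mk.injEq]; omega)]
  rw [Finset.sum_insert (by simp only [Finset.mem_insert, Finset.mem_singleton, Prod.mk.injEq]; omega)]
  rw [Finset.sum_insert (by simp only [Finset.mem_insert, Finset.mem_singleton, Prod.mk.injEq]; omega)]
  rw [Finset.sum_insert (by simp only [Finset.mem_insert, Finset.mem_singleton, Prod.mk.injEq]; omega)]
  rw [Finset.sum_insert (by simp only [Finset.mem_insert, Finset.mem_singleton, Prod.mk.injEq]; omega)]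
  rw [Finset.sum_insert (by simp only [Finset.mem_insert, Finset.mem_singleton, Prod.mk.injEq]; omega)]
  rw [Finset.sum_insert (by simp only [Finset.mem_insert, Finset.mem_singleton, Prod.mk.injEq]; omega)]
  rw [Finset.sum_singleton]
  simp only []
  have z0 : |(t:ℤ) - 1 + (m₀-1) * ((t:ℤ) - 1) + (n₀-1) * (t:ℤ) - v.1| + |(m₀-1) * (-(t:ℤ)) + (n₀-1) * ((t:ℤ) - 1) - v.2| = |-(x + (2*(t:ℤ)-1))| + |-(y - 1)| := by
    rw [show ((t:ℤ) - 1 + (m₀-1) * ((t:ℤ) - 1) + (n₀-1) * (t:ℤ) - v.1) = -(x + (2*(t:ℤ)-1)) from by rw [hx]; ring,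
        show ((m₀-1) * (-(t:ℤ)) + (n₀-1) * ((t:ℤ) - 1) - v.2) = -(y - 1) from by rw [hy]; ring]
  rw [abs_neg, abs_neg] at z0
  rw [z0]
  have z1 : |(t:ℤ) - 1 + (m₀-1) * ((t:ℤ) - 1) + (n₀) * (t:ℤ) - v.1| + |(m₀-1) * (-(t:ℤ)) + (n₀) * ((t:ℤ) - 1) - v.2| = |-(x + ((t:ℤ)-1))| + |-(y - (t:ℤ))| := by
    rw [show ((t:ℤ) - 1 + (m₀-1) * ((t:ℤ) - 1) + (n₀) * (t:ℤ) - v.1) = -(x + ((t:ℤ)-1)) from by rw [hx]; ring,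
        show ((m₀-1) * (-(t:ℤ)) + (n₀) * ((t:ℤ) - 1) - v.2) = -(y - (t:ℤ)) from by rw [hy]; ring]
  rw [abs_neg, abs_neg] at z1
  rw [z1]
  have z2 : |(t:ℤ) - 1 + (m₀-1) * ((t:ℤ) - 1) + (n₀+1) * (t:ℤ) - v.1| + |(m₀-1) * (-(t:ℤ)) + (n₀+1) * ((t:ℤ) - 1) - v.2| = |-(x - 1)| + |-(y - (2*(t:ℤ)-1))| := by
    rw [show ((t:ℤ) - 1 + (m₀-1) * ((t:ℤ) - 1) + (n₀+1) * (t:ℤ) - v.1) = -(x - 1) from by rw [hx]; ring,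
        show ((m₀-1) * (-(t:ℤ)) + (n₀+1) * ((t:ℤ) - 1) - v.2) = -(y - (2*(t:ℤ)-1)) from by rw [hy]; ring]
  rw [abs_neg, abs_neg] at z2
  rw [z2]
  have z3 : |(t:ℤ) - 1 + (m₀) * ((t:ℤ) - 1) + (n₀-1) * (t:ℤ) - v.1| + |(m₀) * (-(t:ℤ)) + (n₀-1) * ((t:ℤ) - 1) - v.2| = |-(x + (t:ℤ))| + |-(y + ((t:ℤ)-1))| := by
    rw [show ((t:ℤ) - 1 + (m₀) * ((t:ℤ) - 1) + (n₀-1) * (t:ℤ) - v.1) = -(x + (t:ℤ)) from by rw [hx]; ring,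
        show ((m₀) * (-(t:ℤ)) + (n₀-1) * ((t:ℤ) - 1) - v.2) = -(y + ((t:ℤ)-1)) from by rw [hy]; ring]
  rw [abs_neg, abs_neg] at z3
  rw [z3]
  have z4 : |(t:ℤ) - 1 + (m₀) * ((t:ℤ) - 1) + (n₀) * (t:ℤ) - v.1| + |(m₀) * (-(t:ℤ)) + (n₀) * ((t:ℤ) - 1) - v.2| = |-x| + |-y| := by
    rw [show ((t:ℤ) - 1 + (m₀) * ((t:ℤ) - 1) + (n₀) * (t:ℤ) - v.1) = -x from by rw [hx]; ring,
        show ((m₀) * (-(t:ℤ)) + (n₀) * ((t:ℤ) - 1) - v.2) = -y from by rw [hy]; ring]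
  rw [abs_neg, abs_neg] at z4
  rw [z4]
  have z5 : |(t:ℤ) - 1 + (m₀) * ((t:ℤ) - 1) + (n₀+1) * (t:ℤ) - v.1| + |(m₀) * (-(t:ℤ)) + (n₀+1) * ((t:ℤ) - 1) - v.2| = |-(x - (t:ℤ))| + |-(y - ((t:ℤ)-1))| := by
    rw [show ((t:ℤ) - 1 + (m₀) * ((t:ℤ) - 1) + (n₀+1) * (t:ℤ) - v.1) = -(x - (t:ℤ)) from by rw [hx]; ring,
        show ((m₀) * (-(t:ℤ)) + (n₀+1) * ((t:ℤ) - 1) - v.2) = -(y - ((t:ℤ)-1)) from by rw [hy]; ring]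
  rw [abs_neg, abs_neg] at z5
  rw [z5]
  have z6 : |(t:ℤ) - 1 + (m₀+1) * ((t:ℤ) - 1) + (n₀-1) * (t:ℤ) - v.1| + |(m₀+1) * (-(t:ℤ)) + (n₀-1) * ((t:ℤ) - 1) - v.2| = |-(x + 1)| + |-(y + (2*(t:ℤ)-1))| := by
    rw [show ((t:ℤ) - 1 + (m₀+1) * ((t:ℤ) - 1) + (n₀-1) * (t:ℤ) - v.1) = -(x + 1) from by rw [hx]; ring,
        show ((m₀+1) * (-(t:ℤ)) + (n₀-1) * ((t:ℤ) - 1) - v.2) = -(y + (2*(t:ℤ)-1)) from by rw [hy]; ring]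
  rw [abs_neg, abs_neg] at z6
  rw [z6]
  have z7 : |(t:ℤ) - 1 + (m₀+1) * ((t:ℤ) - 1) + (n₀) * (t:ℤ) - v.1| + |(m₀+1) * (-(t:ℤ)) + (n₀) * ((t:ℤ) - 1) - v.2| = |-(x - ((t:ℤ)-1))| + |-(y + (t:ℤ))| := by
    rw [show ((t:ℤ) - 1 + (m₀+1) * ((t:ℤ) - 1) + (n₀) * (t:ℤ) - v.1) = -(x - ((t:ℤ)-1)) from by rw [hx]; ring,
        show ((m₀+1) * (-(t:ℤ)) + (n₀) * ((t:ℤ) - 1) - v.2) = -(y + (t:ℤ)) from by rw [hy]; ring]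
  rw [abs_neg, abs_neg] at z7
  rw [z7]
  have z8 : |(t:ℤ) - 1 + (m₀+1) * ((t:ℤ) - 1) + (n₀+1) * (t:ℤ) - v.1| + |(m₀+1) * (-(t:ℤ)) + (n₀+1) * ((t:ℤ) - 1) - v.2| = |-(x - (2*(t:ℤ)-1))| + |-(y + 1)| := by
    rw [show ((t:ℤ) - 1 + (m₀+1) * ((t:ℤ) - 1) + (n₀+1) * (t:ℤ) - v.1) = -(x - (2*(t:ℤ)-1)) from by rw [hx]; ring,
        show ((m₀+1) * (-(t:ℤ)) + (n₀+1) * ((t:ℤ) - 1) - v.2) = -(y + 1) from by rw [hy]; ring]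
  rw [abs_neg, abs_neg] at z8
  rw [z8]
  linarith [key (t:ℤ) (k:ℤ) x y hkZ hktZ hb E]
end

section
/- Let t > k ≥ 1 be integers. The set 𝒯* = {(t−1, 0) + m(t−1, −t) + n(t, t−1) : m, n ∈ ℤ} ⊆ ℤ² is a (t+k, 2k+1)-broadcasting set; that is, every vertex v ∈ ℤ² satisfies ∑_{T ∈ 𝒯*} max{(t+k) − d(T,v), 0} ≥ 2k+1. -/
open scoped ENNReal

private lemma exists_round (N P c : ℤ) (hN : N = 2*c+1) (hc : 0 ≤ c) :
    ∃ m p : ℤ, P = m*N + p ∧ 2*p ≤ N-1 ∧ -(N-1) ≤ 2*p := by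
  have hN0 : 0 < 2*N := by omega
  set m := (2*P+N)/(2*N) with hm
  set r := (2*P+N) % (2*N) with hr
  obtain ⟨p, hp⟩ : ∃ p, P = m*N + p := ⟨P - m*N, by ring⟩
  have h1 : 2*N*m + r = 2*P+N := Int.mul_ediv_add_emod _ _
  have h2 : 0 ≤ r := Int.emod_nonneg _ (by omega)
  have h3 : r < 2*N := Int.emod_lt_of_pos _ hN0
  have h4 : r = 2*p + N := by linear_combination h1 + 2*hp
  exact ⟨m, p, hp, by omega, by omega⟩

private lemma residual_small (t N p q x y : ℤ) (ht : 2 ≤ t)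
    (hN : N = 2*t^2 - 2*t + 1)
    (hp1 : 2*p ≤ N-1) (hp2 : -(N-1) ≤ 2*p)
    (hq1 : 2*q ≤ N-1) (hq2 : -(N-1) ≤ 2*q)
    (hx : N*x = p*(t-1) + q*t) (hy : N*y = -(p*t) + q*(t-1)) :
    (x.natAbs + y.natAbs : ℤ) ≤ t - 1 := by
  have hN0 : (0:ℤ) < N := by nlinarith [sq_nonneg (t-1), sq_nonneg t]
  have h2t : (0:ℤ) ≤ 2*t - 1 := by omega
  have c1 : x + y < t := by
    have e : N*(x+y) < N*t := by
      nlinarith [mul_le_mul_of_nonneg_left hq1 h2t]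
    exact lt_of_mul_lt_mul_left e hN0.le
  have c2 : x - y < t := by
    have e : N*(x-y) < N*t := by
      nlinarith [mul_le_mul_of_nonneg_left hp1 h2t]
    exact lt_of_mul_lt_mul_left e hN0.le
  have c3 : -x + y < t := by
    have e : N*(-x+y) < N*t := by
      nlinarith [mul_le_mul_of_nonneg_left hp2 h2t]
    exact lt_of_mul_lt_mul_left e hN0.le
  have c4 : -x - y < t := by
    have e : N*(-x-y) < N*t := by
      nlinarith [mul_le_mul_of_nonneg_left hq2 h2t]
    exact lt_of_mul_lt_mul_left e hN0.le
  omega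

private lemma signal_ge (t k : ℕ) (hk : 1 ≤ k) (hkt : k < t) (v T T' : ℤ × ℤ)
    (hT : T ∈ towerLattice (t:ℤ)) (hT' : T' ∈ towerLattice (t:ℤ)) (hne : T ≠ T')
    (hd1 : gridDist T v ≤ t - 1) (hd : gridDist T v + gridDist T' v = 2*t - 1) :
    ((2*k+1 : ℕ) : ℝ≥0∞) ≤ signal (t+k) (towerLattice (t:ℤ)) v := by
  classical
  have key := ENNReal.sum_le_tsum (f := fun w : towerLattice (t:ℤ) =>
      (((t+k) - gridDist (w : ℤ × ℤ) v : ℕ) : ℝ≥0∞))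
      ({⟨T, hT⟩, ⟨T', hT'⟩} : Finset (towerLattice (t:ℤ)))
  rw [Finset.sum_pair (by simp only [ne_eq, Subtype.mk.injEq]; exact hne)] at key
  have hle : (((t+k) - gridDist T v : ℕ) : ℝ≥0∞) + (((t+k) - gridDist T' v : ℕ) : ℝ≥0∞) ≤
      signal (t+k) (towerLattice (t:ℤ)) v := key
  refine le_trans ?_ hle
  rw [← Nat.cast_add, Nat.cast_le]
  omega

/-- For `t > k ≥ 1`, the lattice `𝒯*` is a `(t+k, 2k+1)`-broadcasting set of ℤ². -/
theorem towerLattice_isBroadcasting (t k : ℕ) (hk : 1 ≤ k) (hkt : k < t) :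
    IsBroadcasting (t + k) (2 * k + 1) (towerLattice t) := by
  intro v
  obtain ⟨a, b⟩ := v
  have ht2 : (2:ℤ) ≤ (t:ℤ) := by exact_mod_cast (by omega : 2 ≤ t)
  have hc : (0:ℤ) ≤ (t:ℤ)^2 - t := by nlinarith
  obtain ⟨m, p, hPm, hp1, hp2⟩ := exists_round (2*(t:ℤ)^2 - 2*t + 1)
    ((a - ((t:ℤ)-1))*((t:ℤ)-1) - b*t) ((t:ℤ)^2 - t) (by ring) hc
  obtain ⟨n, q, hQn, hq1, hq2⟩ := exists_round (2*(t:ℤ)^2 - 2*t + 1)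
    ((a - ((t:ℤ)-1))*(t:ℤ) + b*((t:ℤ)-1)) ((t:ℤ)^2 - t) (by ring) hc
  obtain ⟨T₁, T₂, hT, hTa, hTb, hTc, hTd, hball⟩ :
      ∃ T₁ T₂ : ℤ, (T₁, T₂) ∈ towerLattice (t:ℤ) ∧
        (T₁ + t, T₂ + t - 1) ∈ towerLattice (t:ℤ) ∧
        (T₁ + t - 1, T₂ - t) ∈ towerLattice (t:ℤ) ∧
        (T₁ - t + 1, T₂ + t) ∈ towerLattice (t:ℤ) ∧
        (T₁ - t, T₂ - t + 1) ∈ towerLattice (t:ℤ) ∧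
        ((a - T₁).natAbs + (b - T₂).natAbs : ℤ) ≤ (t:ℤ) - 1 := by
    refine ⟨(t:ℤ) - 1 + m*((t:ℤ)-1) + n*t, m*(-(t:ℤ)) + n*((t:ℤ)-1),
      ⟨m, n, rfl⟩,
      ⟨m, n+1, by rw [Prod.mk.injEq]; constructor <;> ring⟩,
      ⟨m+1, n, by rw [Prod.mk.injEq]; constructor <;> ring⟩,
      ⟨m-1, n, by rw [Prod.mk.injEq]; constructor <;> ring⟩,
      ⟨m, n-1, by rw [Prod.mk.injEq]; constructor <;> ring⟩, ?_⟩
    exact residual_small (t:ℤ) (2*(t:ℤ)^2 - 2*t + 1) p q _ _ ht2 rfl hp1 hp2 hq1 hq2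
      (by linear_combination ((t:ℤ)-1)*hPm + (t:ℤ)*hQn)
      (by linear_combination (-(t:ℤ))*hPm + ((t:ℤ)-1)*hQn)
  rcases le_or_gt 0 (a - T₁) with hsx | hsx <;> rcases le_or_gt 0 (b - T₂) with hsy | hsy
  · exact signal_ge t k hk hkt (a,b) (T₁,T₂) (T₁ + t, T₂ + t - 1) hT hTa
      (by intro h; rw [Prod.mk.injEq] at h; omega)
      (by simp only [gridDist]; omega) (by simp only [gridDist]; omega)
  · exact signal_ge t k hk hkt (a,b) (T₁,T₂) (T₁ + t - 1, T₂ - t) hT hTb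
      (by intro h; rw [Prod.mk.injEq] at h; omega)
      (by simp only [gridDist]; omega) (by simp only [gridDist]; omega)
  · exact signal_ge t k hk hkt (a,b) (T₁,T₂) (T₁ - t + 1, T₂ + t) hT hTc
      (by intro h; rw [Prod.mk.injEq] at h; omega)
      (by simp only [gridDist]; omega) (by simp only [gridDist]; omega)
  · exact signal_ge t k hk hkt (a,b) (T₁,T₂) (T₁ - t, T₂ - t + 1) hT hTd
      (by intro h; rw [Prod.mk.injEq] at h; omega)
      (by simp only [gridDist]; omega) (by simp only [gridDist]; omega)
end

section
/- For every integer t ≥ 3, the lattice 𝒯₀ = {m(t−1, t−2) + n(t−2, 1−t) : m, n ∈ ℤ} ⊆ ℤ² is a (t,1)-broadcasting set; that is, every vertex of ℤ² is within ℓ1 distance t−1 of some point of 𝒯₀. -/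
/-- The lattice `𝒯₀ = {m (t-1, t-2) + n (t-2, 1-t) : m, n ∈ ℤ}`. -/
def towerLattice₀ (t : ℤ) : Set (ℤ × ℤ) :=
  {p : ℤ × ℤ | ∃ m n : ℤ, p = (m * (t - 1) + n * (t - 2), m * (t - 2) + n * (1 - t))}

/-- For `t ≥ 3`, the lattice `𝒯₀` is a `(t,1)`-broadcasting set of ℤ²; that is, every vertex
of ℤ² is within ℓ1 distance `t - 1` of some point of `𝒯₀`. -/
theorem towerLattice₀_covers (t : ℕ) (ht : 3 ≤ t) (v : ℤ × ℤ) :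
    ∃ w ∈ towerLattice₀ t, gridDist w v ≤ t - 1 := by
  obtain ⟨x, y⟩ := v
  have hT3 : (3:ℤ) ≤ (t:ℤ) := by exact_mod_cast ht
  set T : ℤ := (t:ℤ) with hT
  set k : ℤ := 2*T - 3 with hk
  set N : ℤ := k^2 + 1 with hN
  have hk3 : 3 ≤ k := by rw [hk]; linarith
  have hk0 : (0:ℤ) ≤ k := by linarith
  have hNpos : 0 < N := by positivity
  set a : ℤ := x + y with ha
  set b : ℤ := x - y with hb
  set m : ℤ := (2*(a*k+b) + N) / (2*N) with hm
  set n : ℤ := (2*(b*k-a) + N) / (2*N) with hn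
  set ρ1 : ℤ := (2*(a*k+b) + N) % (2*N) with hρ1
  set ρ2 : ℤ := (2*(b*k-a) + N) % (2*N) with hρ2
  have h2N : (0:ℤ) < 2*N := by linarith
  have hdm := Int.mul_ediv_add_emod (2*(a*k+b)+N) (2*N)
  have hdn := Int.mul_ediv_add_emod (2*(b*k-a)+N) (2*N)
  rw [← hm, ← hρ1] at hdm
  rw [← hn, ← hρ2] at hdn
  have hρ1nn : 0 ≤ ρ1 := Int.emod_nonneg _ (by linarith)
  have hρ1lt : ρ1 < 2*N := Int.emod_lt_of_pos _ h2N
  have hρ2nn : 0 ≤ ρ2 := Int.emod_nonneg _ (by linarith)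
  have hρ2lt : ρ2 < 2*N := Int.emod_lt_of_pos _ h2N
  have hid1 : 2*N*(m*k - n - a) = -(k*(ρ1 - N)) + (ρ2 - N) := by
    linear_combination k*hdm - hdn - 2*a*hN
  have hid2 : 2*N*(m + n*k - b) = -(ρ1 - N) - k*(ρ2 - N) := by
    linear_combination hdm + k*hdn - 2*b*hN
  have hkey : N*(k+1) = 2*N*(T-1) := by rw [hk]; ring
  have hkρ1 : 0 ≤ k*ρ1 := mul_nonneg hk0 hρ1nn
  have hkρ2 : 0 ≤ k*ρ2 := mul_nonneg hk0 hρ2nn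
  have hkρ1' : 0 ≤ k*(2*N - ρ1) := mul_nonneg hk0 (by linarith)
  have hkρ2' : 0 ≤ k*(2*N - ρ2) := mul_nonneg hk0 (by linarith)
  have hE1ub : m*k - n - a ≤ T - 1 := by
    have h1 : 2*N*(m*k - n - a) ≤ 2*N*(T-1) := by
      linarith [hid1, hkρ1, hρ2lt, hkey]
    exact le_of_mul_le_mul_left h1 h2N
  have hE1lb : -(T-1) ≤ m*k - n - a := by
    have h1 : 2*N*(-(T-1)) ≤ 2*N*(m*k - n - a) := by
      linarith [hid1, hkρ1', hρ2nn, hkey]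
    exact le_of_mul_le_mul_left h1 h2N
  have hE2ub : m + n*k - b ≤ T - 1 := by
    have h1 : 2*N*(m + n*k - b) ≤ 2*N*(T-1) := by
      linarith [hid2, hρ1nn, hkρ2, hkey]
    exact le_of_mul_le_mul_left h1 h2N
  have hE2lb : -(T-1) ≤ m + n*k - b := by
    have h1 : 2*N*(-(T-1)) ≤ 2*N*(m + n*k - b) := by
      linarith [hid2, hρ1lt, hkρ2', hkey]
    exact le_of_mul_le_mul_left h1 h2N
  refine ⟨(m*(T-1)+n*(T-2), m*(T-2)+n*(1-T)), ⟨m, n, rfl⟩, ?_⟩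
  simp only [gridDist]
  have hXY1 : m*(T-1)+n*(T-2) - x + (m*(T-2)+n*(1-T) - y) = m*k - n - a := by
    rw [hk, ha]; ring
  have hXY2 : m*(T-1)+n*(T-2) - x - (m*(T-2)+n*(1-T) - y) = m + n*k - b := by
    rw [hk, hb]; ring
  have key : ∀ X Y : ℤ, X + Y ≤ T-1 → -(T-1) ≤ X+Y → X - Y ≤ T-1 → -(T-1) ≤ X-Y →
      X.natAbs + Y.natAbs ≤ t - 1 := by
    intro X Y h1 h2 h3 h4
    omega
  exact key _ _ (by rw [hXY1]; exact hE1ub) (by rw [hXY1]; exact hE1lb)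
    (by rw [hXY2]; exact hE2ub) (by rw [hXY2]; exact hE2lb)
end

section
/- For every integer t ≥ 3, the lattice 𝒯₀ = {m(t−1, t−2) + n(t−2, 1−t) : m, n ∈ ℤ} ⊆ ℤ² is a (t+1, 3)-broadcasting set; that is, every vertex v ∈ ℤ² satisfies ∑_{T ∈ 𝒯₀} max{(t+1) − d(T,v), 0} ≥ 3. -/
open scoped ENNReal

lemma round_exists (A N : ℤ) (hNpos : 0 < N) (hodd : N % 2 = 1) :
    ∃ m : ℤ, 1 - N ≤ 2 * (A - m * N) ∧ 2 * (A - m * N) ≤ N - 1 := by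
  have h2N : (0:ℤ) < 2 * N := by linarith
  refine ⟨(2 * A + N) / (2 * N), ?_⟩
  have h := Int.mul_ediv_add_emod (2 * A + N) (2 * N)
  have h1 := Int.emod_nonneg (2 * A + N) (ne_of_gt h2N)
  have h2 := Int.emod_lt_of_pos (2 * A + N) h2N
  set q := (2 * A + N) / (2 * N) with hq
  set ρ := (2 * A + N) % (2 * N) with hρ
  set P := A - q * N with hP
  have key : 2 * P = ρ - N := by rw [hP]; linarith [h]
  constructor <;> omega

lemma key_ineq (r x y : ℤ) (hr : 1 ≤ r) :
    ∃ m n : ℤ, (x - (m * (r+1) + n * r)).natAbs + (y - (m * r - n * (r+1))).natAbs ≤ r.natAbs := by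
  set N := r^2 + (r+1)^2 with hN
  have hNpos : 0 < N := by positivity
  have hNodd : N % 2 = 1 := by
    have : N = 2 * (r * r + r) + 1 := by rw [hN]; ring
    omega
  obtain ⟨m, hm1, hm2⟩ := round_exists ((r+1) * x + r * y) N hNpos hNodd
  obtain ⟨n, hn1, hn2⟩ := round_exists (r * x - (r+1) * y) N hNpos hNodd
  refine ⟨m, n, ?_⟩
  set e1 := x - (m * (r+1) + n * r) with he1
  set e2 := y - (m * r - n * (r+1)) with he2
  set P := (r+1) * x + r * y - m * N with hP
  set Q := r * x - (r+1) * y - n * N with hQ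
  have hm1' : 1 - N ≤ 2 * P := by rw [hP]; linarith [hm1]
  have hm2' : 2 * P ≤ N - 1 := by rw [hP]; linarith [hm2]
  have hn1' : 1 - N ≤ 2 * Q := by rw [hQ]; linarith [hn1]
  have hn2' : 2 * Q ≤ N - 1 := by rw [hQ]; linarith [hn2]
  have hpos : (0:ℤ) ≤ 2*r+1 := by linarith
  have hA : N * (e1 + e2) = (2*r+1) * P - Q := by
    rw [he1, he2, hP, hQ, hN]; ring
  have hB : N * (e1 - e2) = P + (2*r+1) * Q := by
    rw [he1, he2, hP, hQ, hN]; ring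
  have hub1 : e1 + e2 ≤ r := by
    by_contra hcon
    push_neg at hcon
    have hcon' : r + 1 ≤ e1 + e2 := hcon
    have t1 := mul_le_mul_of_nonneg_left hm2' hpos
    have t2 := mul_le_mul_of_nonneg_left hcon' hNpos.le
    linarith [hA, hn1', t1, t2]
  have hlb1 : -r ≤ e1 + e2 := by
    by_contra hcon
    push_neg at hcon
    have hcon' : e1 + e2 ≤ -(r+1) := by linarith
    have t1 := mul_le_mul_of_nonneg_left hm1' hpos
    have t2 := mul_le_mul_of_nonneg_left hcon' hNpos.le
    linarith [hA, hn2', t1, t2]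
  have hub2 : e1 - e2 ≤ r := by
    by_contra hcon
    push_neg at hcon
    have hcon' : r + 1 ≤ e1 - e2 := hcon
    have t1 := mul_le_mul_of_nonneg_left hn2' hpos
    have t2 := mul_le_mul_of_nonneg_left hcon' hNpos.le
    linarith [hB, hm1', t1, t2]
  have hlb2 : -r ≤ e1 - e2 := by
    by_contra hcon
    push_neg at hcon
    have hcon' : e1 - e2 ≤ -(r+1) := by linarith
    have t1 := mul_le_mul_of_nonneg_left hn1' hpos
    have t2 := mul_le_mul_of_nonneg_left hcon' hNpos.le
    linarith [hB, hm2', t1, t2]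
  omega

/-- Every vertex is within distance `t - 2` of a tower of the lattice. -/
lemma close_tower (t : ℤ) (ht : 3 ≤ t) (x y : ℤ) :
    ∃ p : ℤ × ℤ, p ∈ towerLattice₀ t ∧
      (p.1 - x).natAbs + (p.2 - y).natAbs ≤ (t - 2).natAbs := by
  obtain ⟨m, n, hmn⟩ := key_ineq (t - 2) x y (by omega)
  refine ⟨(m * (t - 1) + n * (t - 2), m * (t - 2) + n * (1 - t)), ⟨m, n, rfl⟩, ?_⟩
  set a := m * ((t-2)+1) + n * (t-2) with ha
  set b := m * (t-2) - n * ((t-2)+1) with hb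
  have h1 : (m * (t - 1) + n * (t - 2), m * (t - 2) + n * (1 - t)).1 = a := by
    show m * (t - 1) + n * (t - 2) = a
    rw [ha]; ring
  have h2 : (m * (t - 1) + n * (t - 2), m * (t - 2) + n * (1 - t)).2 = b := by
    show m * (t - 2) + n * (1 - t) = b
    rw [hb]; ring
  rw [h1, h2]
  omega

/-- For `t ≥ 3`, the lattice `𝒯₀` is a `(t+1, 3)`-broadcasting set of ℤ². -/
theorem towerLattice₀_isBroadcasting (t : ℕ) (ht : 3 ≤ t) :
    IsBroadcasting (t + 1) 3 (towerLattice₀ t) := by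
  intro v
  obtain ⟨T, hTmem, hmn⟩ := close_tower (t : ℤ) (by exact_mod_cast ht) v.1 v.2
  have hdist : gridDist T v ≤ t - 2 := by
    simp only [gridDist]
    omega
  have h3 : (3:ℝ≥0∞) ≤ ((t + 1 - gridDist T v : ℕ) : ℝ≥0∞) := by
    have h : (3:ℕ) ≤ t + 1 - gridDist T v := by omega
    exact_mod_cast h
  have h4 : ((t + 1 - gridDist T v : ℕ) : ℝ≥0∞) ≤ signal (t+1) (towerLattice₀ t) v := by
    unfold signal
    exact ENNReal.le_tsum (⟨T, hTmem⟩ : ↥(towerLattice₀ (t:ℤ)))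
  have h5 : ((3:ℕ):ℝ≥0∞) = (3:ℝ≥0∞) := by norm_num
  rw [h5]
  exact le_trans h3 h4
end

section
/- For all integers n ≥ 1, t ≥ 1, and k ≥ 1, δ_{t+k, 1+2k}(ℤⁿ) ≤ δ_{t,1}(ℤⁿ); in fact every (t,1)-broadcasting set 𝒯 ⊆ ℤⁿ is also (t+k, 1+2k)-broadcasting. -/
open scoped ENNReal

/-- ℓ1 (taxicab) distance on the grid ℤⁿ. -/
def gridDistN {n : ℕ} (u v : Fin n → ℤ) : ℕ := ∑ i, (u i - v i).natAbs

/-- Total signal received at `v` from a set of towers `T ⊆ ℤⁿ`, each transmitting strength `t`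
(a tower at distance `d` contributes `max (t - d) 0`). -/
noncomputable def signalN {n : ℕ} (t : ℕ) (T : Set (Fin n → ℤ)) (v : Fin n → ℤ) : ℝ≥0∞ :=
  ∑' w : T, ((t - gridDistN w v : ℕ) : ℝ≥0∞)

/-- `T ⊆ ℤⁿ` is `(t,r)`-broadcasting if every vertex receives total signal at least `r`. -/
def IsBroadcastingN {n : ℕ} (t r : ℕ) (T : Set (Fin n → ℤ)) : Prop :=
  ∀ v : Fin n → ℤ, (r : ℝ≥0∞) ≤ signalN t T v

/-- Density of a subset of ℤⁿ: `limsup_{m→∞} |T ∩ [-m,m]ⁿ| / (2m+1)ⁿ`. -/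
noncomputable def densityN {n : ℕ} (T : Set (Fin n → ℤ)) : ℝ≥0∞ :=
  Filter.atTop.limsup fun m : ℕ =>
    (T ∩ {v : Fin n → ℤ | ∀ i, (v i).natAbs ≤ m}).encard / (((2 * m + 1) ^ n : ℕ) : ℝ≥0∞)

/-- `δ_{t,r}(ℤⁿ)`: the infimum of the densities of `(t,r)`-broadcasting subsets of ℤⁿ. -/
noncomputable def deltaGridN (n t r : ℕ) : ℝ≥0∞ :=
  ⨅ (T : Set (Fin n → ℤ)) (_ : IsBroadcastingN t r T), densityN T

lemma key_count (t k : ℕ) (c : ℤ) (m : ℕ) :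
    ((Finset.Icc (-(k:ℤ)) k).filter (fun j => ((c - j).natAbs + m < t))).card
      ≤ t + k - (c.natAbs + m) := by
  set s := (Finset.Icc (-(k:ℤ)) k).filter (fun j => ((c - j).natAbs + m < t)) with hs
  rcases s.eq_empty_or_nonempty with h | ⟨j, hj⟩
  · simp [h]
  · rw [hs, Finset.mem_filter, Finset.mem_Icc] at hj
    obtain ⟨⟨hj1, hj2⟩, hj3⟩ := hj
    have hsub : s ⊆ Finset.Icc (max (-(k:ℤ)) (c - ((t:ℤ) - 1 - m)))
        (min (k:ℤ) (c + ((t:ℤ) - 1 - m))) := by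
      intro x hx
      rw [hs, Finset.mem_filter, Finset.mem_Icc] at hx
      rw [Finset.mem_Icc]
      omega
    have hcc := Finset.card_le_card hsub
    rw [Int.card_Icc] at hcc
    omega

lemma dist_decomp {n : ℕ} (i0 : Fin n) (w v : Fin n → ℤ) (j : ℤ) :
    gridDistN w (fun i => v i + if i = i0 then j else 0)
      = (w i0 - v i0 - j).natAbs + ∑ i ∈ Finset.univ.erase i0, (w i - v i).natAbs := by
  unfold gridDistN
  rw [← Finset.add_sum_erase _ _ (Finset.mem_univ i0)]
  congr 1
  · simp; ring_nf
  · exact Finset.sum_congr rfl fun i hi => by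
      simp [Finset.mem_erase.mp hi |>.1]

lemma dist_self_decomp {n : ℕ} (i0 : Fin n) (w v : Fin n → ℤ) :
    gridDistN w v = (w i0 - v i0).natAbs + ∑ i ∈ Finset.univ.erase i0, (w i - v i).natAbs := by
  unfold gridDistN
  rw [← Finset.add_sum_erase _ _ (Finset.mem_univ i0)]

/-- Per-tower bound: at strength `t+k`, a tower's contribution at `v` dominates the number
of points `v + j·e₀`, `j ∈ [-k,k]`, that it covers (distance `< t`). -/
lemma tower_count {n : ℕ} (t k : ℕ) (i0 : Fin n) (w v : Fin n → ℤ) :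
    ((Finset.Icc (-(k:ℤ)) k).filter
        (fun j => gridDistN w (fun i => v i + if i = i0 then j else 0) < t)).card
      ≤ t + k - gridDistN w v := by
  have h := key_count t k (w i0 - v i0) (∑ i ∈ Finset.univ.erase i0, (w i - v i).natAbs)
  rw [← dist_self_decomp i0 w v] at h
  refine le_trans (le_of_eq ?_) h
  congr 1
  refine Finset.filter_congr fun j _ => ?_
  rw [dist_decomp i0 w v j]

/-- For `n ≥ 1`, `t ≥ 1`, `k ≥ 1`: every `(t,1)`-broadcasting set of ℤⁿ is also
`(t+k, 1+2k)`-broadcasting; consequently `δ_{t+k, 1+2k}(ℤⁿ) ≤ δ_{t,1}(ℤⁿ)`. -/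
theorem broadcastingN_one_and_delta (n t k : ℕ) (hn : 1 ≤ n) (ht : 1 ≤ t) (hk : 1 ≤ k) :
    (∀ T : Set (Fin n → ℤ), IsBroadcastingN t 1 T → IsBroadcastingN (t + k) (1 + 2 * k) T) ∧
    deltaGridN n (t + k) (1 + 2 * k) ≤ deltaGridN n t 1 := by
  have main : ∀ T : Set (Fin n → ℤ), IsBroadcastingN t 1 T →
      IsBroadcastingN (t + k) (1 + 2 * k) T := by
    intro T hT v
    set i0 : Fin n := ⟨0, hn⟩
    set vj : ℤ → (Fin n → ℤ) := fun j i => v i + if i = i0 then j else 0 with hvj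
    -- each shifted point has a tower at distance < t
    have hex : ∀ j : ℤ, ∃ w : T, gridDistN (w : Fin n → ℤ) (vj j) < t := by
      intro j
      by_contra hc
      push_neg at hc
      have hz : signalN t T (vj j) = 0 := by
        unfold signalN
        refine ENNReal.tsum_eq_zero.mpr fun w => ?_
        have h1 := hc w
        have h2 : t - gridDistN (w : Fin n → ℤ) (vj j) = 0 := by omega
        simp [h2]
      have := hT (vj j)
      rw [hz] at this
      simp at this
    have hTne : Nonempty T := ⟨(hex 0).choose⟩
    set F : ℤ → T := fun j => (hex j).choose with hF
    have hFspec : ∀ j : ℤ, gridDistN ((F j : Fin n → ℤ)) (vj j) < t := fun j => (hex j).choose_spec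
    set S : Finset T := (Finset.Icc (-(k:ℤ)) k).image F with hS
    have hcardIcc : (Finset.Icc (-(k:ℤ)) k).card = 1 + 2 * k := by
      rw [Int.card_Icc]; omega
    have hfiber : (Finset.Icc (-(k:ℤ)) k).card
        = ∑ w ∈ S, ((Finset.Icc (-(k:ℤ)) k).filter (fun j => F j = w)).card :=
      Finset.card_eq_sum_card_fiberwise fun j hj => Finset.mem_image_of_mem F hj
    -- each fiber is dominated by the tower's contribution
    have hdom : ∀ w : T, ((Finset.Icc (-(k:ℤ)) k).filter (fun j => F j = w)).card
        ≤ t + k - gridDistN (w : Fin n → ℤ) v := by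
      intro w
      refine le_trans (Finset.card_le_card ?_) (tower_count t k i0 (w : Fin n → ℤ) v)
      intro j hj
      rw [Finset.mem_filter] at hj ⊢
      refine ⟨hj.1, ?_⟩
      have := hFspec j
      rw [hj.2] at this
      exact this
    calc ((1 + 2 * k : ℕ) : ℝ≥0∞)
        = (((Finset.Icc (-(k:ℤ)) k).card : ℕ) : ℝ≥0∞) := by rw [hcardIcc]
      _ = ∑ w ∈ S, (((( Finset.Icc (-(k:ℤ)) k).filter (fun j => F j = w)).card : ℕ) : ℝ≥0∞) := by
          rw [hfiber]; push_cast; rfl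
      _ ≤ ∑ w ∈ S, ((t + k - gridDistN (w : Fin n → ℤ) v : ℕ) : ℝ≥0∞) := by
          refine Finset.sum_le_sum fun w _ => ?_
          exact_mod_cast hdom w
      _ ≤ signalN (t + k) T v := ENNReal.sum_le_tsum S
  refine ⟨main, ?_⟩
  refine le_iInf fun T => le_iInf fun h => ?_
  exact iInf₂_le T (main T h)
end

section
/- For all integers n ≥ 1, t ≥ 2, and k ≥ 1, δ_{t+k, 2+2k}(ℤⁿ) ≤ δ_{t,2}(ℤⁿ); in fact every (t,2)-broadcasting set 𝒯 ⊆ ℤⁿ is also (t+k, 2+2k)-broadcasting. -/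
open scoped ENNReal

lemma gridDistN_triangle {n : ℕ} (u v w : Fin n → ℤ) :
    gridDistN u w ≤ gridDistN u v + gridDistN v w := by
  unfold gridDistN
  rw [← Finset.sum_add_distrib]
  refine Finset.sum_le_sum fun i _ => ?_
  have h : u i - w i = (u i - v i) + (v i - w i) := by ring
  rw [h]; exact Int.natAbs_add_le _ _

lemma stepN {n : ℕ} (hn : 1 ≤ n) (t r : ℕ) (hr : 1 ≤ r) (T : Set (Fin n → ℤ))
    (hT : IsBroadcastingN t r T) : IsBroadcastingN (t + 1) (r + 2) T := by
  intro v
  by_cases hcase : ∃ w1 w2 : T, w1 ≠ w2 ∧ gridDistN (w1 : Fin n → ℤ) v < t ∧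
      gridDistN (w2 : Fin n → ℤ) v < t
  · obtain ⟨w1, w2, hne, h1, h2⟩ := hcase
    have key : ∀ w : T, ((t - gridDistN (w : Fin n → ℤ) v : ℕ) : ℝ≥0∞) +
        (if gridDistN (w : Fin n → ℤ) v < t then 1 else 0) ≤
        ((t + 1 - gridDistN (w : Fin n → ℤ) v : ℕ) : ℝ≥0∞) := by
      intro w
      split_ifs with h
      · have e : t + 1 - gridDistN (w : Fin n → ℤ) v
            = (t - gridDistN (w : Fin n → ℤ) v) + 1 := by omega
        rw [e]
        exact le_of_eq (by push_cast; ring)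
      · simpa using ((Nat.cast_le (α := ℝ≥0∞)).mpr (by omega : t - gridDistN (w : Fin n → ℤ) v
          ≤ t + 1 - gridDistN (w : Fin n → ℤ) v))
    have hsum : signalN t T v + ∑' w : T,
        (if gridDistN (w : Fin n → ℤ) v < t then (1 : ℝ≥0∞) else 0)
        ≤ signalN (t + 1) T v := by
      rw [signalN, ← ENNReal.tsum_add]
      exact ENNReal.tsum_le_tsum key
    have hchi : (2 : ℝ≥0∞) ≤ ∑' w : T,
        (if gridDistN (w : Fin n → ℤ) v < t then (1 : ℝ≥0∞) else 0) := by
      have := ENNReal.sum_le_tsum (f := fun w : T =>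
        (if gridDistN (w : Fin n → ℤ) v < t then (1 : ℝ≥0∞) else 0)) ({w1, w2} : Finset T)
      rw [Finset.sum_pair hne] at this
      have h2' : (2 : ℝ≥0∞) = 1 + 1 := by norm_num
      rw [h2']
      simpa [h1, h2] using this
    calc ((r + 2 : ℕ) : ℝ≥0∞) = (r : ℝ≥0∞) + 2 := by push_cast; ring
    _ ≤ signalN t T v + ∑' w : T,
        (if gridDistN (w : Fin n → ℤ) v < t then (1 : ℝ≥0∞) else 0) :=
      add_le_add (hT v) hchi
    _ ≤ signalN (t + 1) T v := hsum
  · push_neg at hcase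
    by_cases hex : ∃ w0 : T, gridDistN (w0 : Fin n → ℤ) v < t
    · obtain ⟨w0, hw0⟩ := hex
      have huniq : ∀ w : T, w ≠ w0 → t ≤ gridDistN (w : Fin n → ℤ) v := by
        intro w hw
        by_contra h
        exact absurd (hcase w w0 hw (by omega)) (by omega)
      set d0 := gridDistN (w0 : Fin n → ℤ) v with hd0
      have hsig : signalN t T v = ((t - d0 : ℕ) : ℝ≥0∞) := by
        rw [signalN]
        exact tsum_eq_single w0 (fun w hw => by
          have := huniq w hw
          simp [Nat.sub_eq_zero_of_le this])
      have hrd : r ≤ t - d0 := by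
        have := hT v
        rw [hsig] at this
        exact_mod_cast this
      by_cases hbig : r + 1 ≤ t - d0
      · have := ENNReal.le_tsum (f := fun w : T =>
          ((t + 1 - gridDistN (w : Fin n → ℤ) v : ℕ) : ℝ≥0∞)) w0
        refine le_trans ?_ this
        exact Nat.cast_le.mpr (by omega)
      · have htd : t = d0 + r := by omega
        -- build neighbor u of v, one step away from w0
        set i0 : Fin n := ⟨0, hn⟩ with hi0
        set s : ℤ := if (w0 : Fin n → ℤ) i0 ≤ v i0 then 1 else -1 with hs
        set u : Fin n → ℤ := Function.update v i0 (v i0 + s) with hu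
        have hrest : ∀ w : Fin n → ℤ, ∀ x : Fin n → ℤ,
            gridDistN w x = (w i0 - x i0).natAbs +
              ∑ i ∈ Finset.univ.erase i0, (w i - x i).natAbs := by
          intro w x
          rw [gridDistN, ← Finset.add_sum_erase _ _ (Finset.mem_univ i0)]
        have hui0 : u i0 = v i0 + s := by simp [hu]
        have hune : ∀ i, i ≠ i0 → u i = v i := by
          intro i hi; simp [hu, Function.update_of_ne hi]
        have hdw0u : gridDistN (w0 : Fin n → ℤ) u = d0 + 1 := by
          rw [hrest _ u, hd0, hrest _ v]
          have h1 : ((w0 : Fin n → ℤ) i0 - u i0).natAbs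
              = ((w0 : Fin n → ℤ) i0 - v i0).natAbs + 1 := by
            rw [hui0, hs]; split_ifs with h <;> omega
          have h2 : ∑ i ∈ Finset.univ.erase i0, ((w0 : Fin n → ℤ) i - u i).natAbs
              = ∑ i ∈ Finset.univ.erase i0, ((w0 : Fin n → ℤ) i - v i).natAbs := by
            refine Finset.sum_congr rfl fun i hi => ?_
            rw [hune i (Finset.mem_erase.mp hi).1]
          omega
        have hduv : gridDistN u v = 1 := by
          rw [hrest u v]
          have h1 : (u i0 - v i0).natAbs = 1 := by
            rw [hui0, hs]; split_ifs <;> simp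
          have h2 : ∑ i ∈ Finset.univ.erase i0, (u i - v i).natAbs = 0 := by
            refine Finset.sum_eq_zero fun i hi => ?_
            rw [hune i (Finset.mem_erase.mp hi).1]; simp
          omega
        -- signal at u splits
        have hsplit := ENNReal.tsum_eq_add_tsum_ite (f := fun w : T =>
          ((t - gridDistN (w : Fin n → ℤ) u : ℕ) : ℝ≥0∞)) w0
        have h1 := hT u
        rw [signalN, hsplit] at h1
        simp only [hdw0u] at h1
        have e0 : t - (d0 + 1) = r - 1 := by omega
        rw [e0] at h1
        have h2 : ((r : ℕ) : ℝ≥0∞) = ((r - 1 : ℕ) : ℝ≥0∞) + 1 := by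
          have e : r = (r - 1) + 1 := by omega
          nth_rewrite 1 [e]
          push_cast
          ring
        rw [h2] at h1
        have hrestpos := (ENNReal.add_le_add_iff_left
          (show ((r - 1 : ℕ) : ℝ≥0∞) ≠ ⊤ by simp)).mp h1
        have hex' : ∃ w : T, w ≠ w0 ∧ gridDistN (w : Fin n → ℤ) u < t := by
          by_contra hno
          push_neg at hno
          have hz : (1 : ℝ≥0∞) ≤ ∑' _ : T, (0 : ℝ≥0∞) :=
            le_trans hrestpos (ENNReal.tsum_le_tsum fun w => by
              split_ifs with hw
              · exact le_refl _
              · simp [Nat.sub_eq_zero_of_le (hno w hw)])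
          simp at hz
        obtain ⟨w', hw'ne, hw'u⟩ := hex'
        have hw'v : gridDistN (w' : Fin n → ℤ) v = t := by
          have h1 : gridDistN (w' : Fin n → ℤ) v ≤ gridDistN (w' : Fin n → ℤ) u + 1 := by
            have := gridDistN_triangle (w' : Fin n → ℤ) u v
            omega
          have h2 := huniq w' hw'ne
          omega
        -- now sum over {w0, w'}
        have hfin := ENNReal.sum_le_tsum (f := fun w : T =>
          ((t + 1 - gridDistN (w : Fin n → ℤ) v : ℕ) : ℝ≥0∞)) ({w0, w'} : Finset T)
        rw [Finset.sum_pair (Ne.symm hw'ne)] at hfin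
        refine le_trans ?_ hfin
        have e1 : t + 1 - gridDistN (w0 : Fin n → ℤ) v = r + 1 := by
          rw [← hd0]; omega
        have e2 : t + 1 - gridDistN (w' : Fin n → ℤ) v = 1 := by rw [hw'v]; omega
        rw [e1, e2, ← Nat.cast_add]
    · push_neg at hex
      exfalso
      have : signalN t T v = 0 := by
        rw [signalN]
        refine ENNReal.tsum_eq_zero.mpr fun w => ?_
        have := hex w
        simp [Nat.sub_eq_zero_of_le this]
      have h := hT v
      rw [this] at h
      simp only [nonpos_iff_eq_zero, Nat.cast_eq_zero] at h
      omega

/-- For `n ≥ 1`, `t ≥ 2`, `k ≥ 1`: every `(t,2)`-broadcasting set of ℤⁿ is also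
`(t+k, 2+2k)`-broadcasting; consequently `δ_{t+k, 2+2k}(ℤⁿ) ≤ δ_{t,2}(ℤⁿ)`. -/
theorem broadcastingN_two_and_delta (n t k : ℕ) (hn : 1 ≤ n) (ht : 2 ≤ t) (hk : 1 ≤ k) :
    (∀ T : Set (Fin n → ℤ), IsBroadcastingN t 2 T → IsBroadcastingN (t + k) (2 + 2 * k) T) ∧
    deltaGridN n (t + k) (2 + 2 * k) ≤ deltaGridN n t 2 := by
  have main : ∀ k : ℕ, ∀ T : Set (Fin n → ℤ),
      IsBroadcastingN t 2 T → IsBroadcastingN (t + k) (2 + 2 * k) T := by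
    intro k
    induction k with
    | zero => intro T hT; simpa using hT
    | succ m ih =>
      intro T hT
      have h := stepN hn (t + m) (2 + 2 * m) (by omega) T (ih T hT)
      have e1 : t + (m + 1) = (t + m) + 1 := by ring
      have e2 : 2 + 2 * (m + 1) = (2 + 2 * m) + 2 := by ring
      rw [e1, e2]
      exact h
  refine ⟨main k, ?_⟩
  rw [deltaGridN]
  refine le_iInf fun T => le_iInf fun hT => ?_
  calc deltaGridN n (t + k) (2 + 2 * k)
      ≤ ⨅ (_ : IsBroadcastingN (t + k) (2 + 2 * k) T), densityN T := iInf_le _ T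
    _ ≤ densityN T := iInf_le _ (main k T hT)
end

section
/- For all integers n ≥ 3, k ≥ 1, and t ≥ r ≥ 1, every (t,r)-broadcasting set of the k-th power of the cycle on n vertices has size at least ⌈n / ((2t−r−1)k + 1)⌉; that is, γ_{t,r}(C_n^{(k)}) ≥ ⌈n / ((2t−r−1)k + 1)⌉. -/
/-! Going around the cycle, let `p` and `q` be the gaps from a tower `c` back to the previous
tower and on to the next one. If `p ≤ q` but `p + q ≥ 2(2t-r-1)k + 3`, the vertex at offset
`(t-1)k + 1 - min(p, (r-1)k)` after `c` is at distance at least `t` from every other tower and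
more than `t - r` from `c`, so it receives less than `r`; reflecting the cycle handles `q < p`.
Hence `p + q ≤ 2((2t-r-1)k + 1)` at every tower, and since both the forward and the backward
gaps cover the cycle, summing over the towers gives `n ≤ |T|((2t-r-1)k + 1)`. -/

open Finset Pointwise

section CyclePowDist

variable {n k : ℕ}

lemma cyclePowDist_comm (x y : Fin n) : cyclePowDist n k x y = cyclePowDist n k y x := by
  rw [cyclePowDist, cyclePowDist, max_comm, min_comm (x : ℕ)]

lemma cyclePowDist_self (x : Fin n) : cyclePowDist n k x x = 0 := by
  simp [cyclePowDist, Nat.eq_zero_or_pos]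

lemma cyclePowDist_eq_val_sub (x y : Fin n) :
    cyclePowDist n k x y = (min (y - x).val (n - (y - x).val) + k - 1) / k := by
  have hx := x.isLt
  unfold cyclePowDist
  congr 2
  rcases le_or_gt x y with h | h
  · rw [Fin.sub_val_of_le h]
    have := Fin.le_def.mp h
    omega
  · rw [Fin.coe_sub_iff_lt.mpr h]
    have := Fin.lt_def.mp h
    omega

lemma lt_cyclePowDist (hk : 0 < k) {x y : Fin n} {m : ℕ} (h₁ : m * k < (y - x).val)
    (h₂ : m * k < n - (y - x).val) : m < cyclePowDist n k x y := by
  rw [cyclePowDist_eq_val_sub, Nat.lt_iff_add_one_le, Nat.le_div_iff_mul_le hk, add_one_mul]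
  omega

lemma cyclePowDist_neg_neg [NeZero n] (x y : Fin n) :
    cyclePowDist n k (-x) (-y) = cyclePowDist n k x y := by
  rw [cyclePowDist_comm x y, cyclePowDist_eq_val_sub, cyclePowDist_eq_val_sub, neg_sub_neg]

end CyclePowDist

section Broadcasting

variable {n k t r : ℕ} {S : Finset (Fin n)}

lemma isCycleBroadcasting_univ (htr : r ≤ t) : IsCycleBroadcasting n k t r univ := fun v =>
  calc r ≤ t - cyclePowDist n k v v := by rw [cyclePowDist_self]; exact htr
    _ ≤ ∑ w, (t - cyclePowDist n k w v) :=
      single_le_sum (f := fun w => t - cyclePowDist n k w v) (fun _ _ => Nat.zero_le _) (mem_univ v)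

lemma IsCycleBroadcasting.nonempty [NeZero n] (hr : 0 < r) (hS : IsCycleBroadcasting n k t r S) :
    S.Nonempty := by
  rw [nonempty_iff_ne_empty]
  rintro rfl
  simpa using (hS 0).trans_lt' hr

lemma IsCycleBroadcasting.neg [NeZero n] (hS : IsCycleBroadcasting n k t r S) :
    IsCycleBroadcasting n k t r (-S) := by
  intro v
  rw [sum_neg_index]
  convert hS (-v) using 3 with w
  rw [← cyclePowDist_neg_neg w, neg_neg]

end Broadcasting

section Gaps

open Fin.CommRing

variable {n : ℕ} [NeZero n] (S : Finset (Fin n)) (c : Fin n)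

noncomputable def gapAfter : ℕ := sInf {j : ℕ | 0 < j ∧ c + (j : Fin n) ∈ S}

noncomputable def gapBefore : ℕ := gapAfter (-S) (-c)

variable {S c}

lemma gapAfter_spec (hc : c ∈ S) : 0 < gapAfter S c ∧ c + (gapAfter S c : Fin n) ∈ S :=
  Nat.sInf_mem (s := {j : ℕ | 0 < j ∧ c + (j : Fin n) ∈ S})
    ⟨n, NeZero.pos n, by rwa [Fin.natCast_self, add_zero]⟩

lemma gapAfter_le (hc : c ∈ S) : gapAfter S c ≤ n :=
  Nat.sInf_le (show n ∈ {j : ℕ | 0 < j ∧ c + (j : Fin n) ∈ S} from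
    ⟨NeZero.pos n, by rwa [Fin.natCast_self, add_zero]⟩)

lemma add_notMem_of_lt_gapAfter {j : ℕ} (hj : 0 < j) (hjc : j < gapAfter S c) :
    c + (j : Fin n) ∉ S :=
  fun h => Nat.notMem_of_lt_sInf hjc ⟨hj, h⟩

lemma sub_notMem_of_lt_gapBefore {j : ℕ} (hj : 0 < j) (hjc : j < gapBefore S c) :
    c - (j : Fin n) ∉ S := by
  have := add_notMem_of_lt_gapAfter hj hjc
  rwa [mem_neg', neg_add, neg_neg, ← sub_eq_add_neg] at this

lemma card_le_sum_gapAfter (hS : S.Nonempty) : n ≤ ∑ c ∈ S, gapAfter S c := by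
  have hcover : ∀ v : Fin n, ∃ c ∈ S, ∃ j < gapAfter S c, c + (j : Fin n) = v := by
    intro v
    have hex : ∃ j : ℕ, v - j ∈ S := by
      obtain ⟨s, hs⟩ := hS
      exact ⟨(v - s).val, by rwa [Fin.cast_val_eq_self, sub_sub_cancel]⟩
    set j := Nat.find hex
    have hj : v - (j : Fin n) ∈ S := Nat.find_spec hex
    refine ⟨v - j, hj, j, ?_, sub_add_cancel _ _⟩
    by_contra! hle
    obtain ⟨hpos, hnext⟩ := gapAfter_spec hj
    refine Nat.find_min hex (m := j - gapAfter S (v - j)) (by omega) ?_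
    convert hnext using 1
    rw [Nat.cast_sub hle]
    abel
  calc n = (univ : Finset (Fin n)).card := (card_fin n).symm
    _ ≤ (S.biUnion fun c => (range (gapAfter S c)).image fun j : ℕ => c + (j : Fin n)).card :=
        card_le_card fun v _ => by simpa using hcover v
    _ ≤ ∑ c ∈ S, ((range (gapAfter S c)).image fun j : ℕ => c + (j : Fin n)).card :=
        card_biUnion_le
    _ ≤ ∑ c ∈ S, gapAfter S c := sum_le_sum fun c _ => card_image_le.trans (card_range _).le

lemma card_le_sum_gapBefore (hS : S.Nonempty) : n ≤ ∑ c ∈ S, gapBefore S c := by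
  simpa only [gapBefore, sum_neg_index, neg_neg] using card_le_sum_gapAfter hS.neg

end Gaps

section Bound

open Fin.CommRing

variable {n k t r : ℕ} [NeZero n] {S : Finset (Fin n)} {c : Fin n}

lemma gapBefore_add_gapAfter_le_of_le (hk : 0 < k) (hr : 1 ≤ r) (htr : r ≤ t)
    (hS : IsCycleBroadcasting n k t r S) (hc : c ∈ S) (hpq : gapBefore S c ≤ gapAfter S c) :
    gapBefore S c + gapAfter S c ≤ 2 * ((2 * t - r - 1) * k) + 2 := by
  set p := gapBefore S c
  set q := gapAfter S c
  have hqn : q ≤ n := gapAfter_le hc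
  have e₁ : (t - 1) * k = (t - r) * k + (r - 1) * k := by rw [← add_mul]; congr 1; omega
  have e₂ : (2 * t - r - 1) * k = 2 * ((t - r) * k) + (r - 1) * k := by
    rw [← mul_assoc, ← add_mul]; congr 1; omega
  by_contra! hlong
  set α := (t - 1) * k + 1 - min p ((r - 1) * k)
  set x := c + (α : Fin n)
  have hxc : (x - c).val = α := by
    rw [add_sub_cancel_left, Fin.val_natCast, Nat.mod_eq_of_lt (by omega)]
  have hnear : t - r < cyclePowDist n k c x := lt_cyclePowDist hk (by omega) (by omega)
  have hfar : ∀ w ∈ S, w ≠ c → t ≤ cyclePowDist n k w x := by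
    intro w hw hwc
    set o := (w - c).val
    have hc_add : c + (o : Fin n) = w := by rw [Fin.cast_val_eq_self]; abel
    have ho : 0 < o := Nat.pos_of_ne_zero (by rwa [Ne, Fin.val_eq_zero_iff, sub_eq_zero])
    have hon : o < n := (w - c).isLt
    have hqo : q ≤ o := by
      by_contra! h
      exact add_notMem_of_lt_gapAfter ho h (hc_add ▸ hw)
    have hop : o + p ≤ n := by
      by_contra! h
      refine sub_notMem_of_lt_gapBefore (S := S) (c := c) (j := n - o) (by omega) (by omega) ?_
      rwa [Nat.cast_sub hon.le, Fin.natCast_self, zero_sub, sub_neg_eq_add, hc_add]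
    have hxw : (x - w).val = n + α - o := by
      rw [← sub_sub_sub_cancel_right x w c, Fin.coe_sub_iff_lt.mpr (Fin.lt_def.mpr (by omega)),
        hxc]
    exact Nat.le_of_pred_lt (lt_cyclePowDist (m := t - 1) hk (by omega) (by omega))
  have hsignal := hS x
  rw [sum_eq_single_of_mem c hc fun w hw hwc => Nat.sub_eq_zero_of_le (hfar w hw hwc)] at hsignal
  omega

lemma gapBefore_add_gapAfter_le (hk : 0 < k) (hr : 1 ≤ r) (htr : r ≤ t)
    (hS : IsCycleBroadcasting n k t r S) (hc : c ∈ S) :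
    gapBefore S c + gapAfter S c ≤ 2 * ((2 * t - r - 1) * k) + 2 := by
  rcases le_total (gapBefore S c) (gapAfter S c) with h | h
  · exact gapBefore_add_gapAfter_le_of_le hk hr htr hS hc h
  · have := gapBefore_add_gapAfter_le_of_le hk hr htr hS.neg (neg_mem_neg hc)
      (by simpa only [gapBefore, neg_neg] using h)
    simpa only [gapBefore, neg_neg, add_comm] using this

lemma IsCycleBroadcasting.le_card_mul (hk : 0 < k) (hr : 1 ≤ r) (htr : r ≤ t)
    (hS : IsCycleBroadcasting n k t r S) : n ≤ S.card * ((2 * t - r - 1) * k + 1) := by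
  have hne := hS.nonempty hr
  have := sum_le_card_nsmul S _ _ fun c hc => gapBefore_add_gapAfter_le hk hr htr hS hc
  rw [sum_add_distrib, smul_eq_mul] at this
  linarith [card_le_sum_gapBefore hne, card_le_sum_gapAfter hne]

end Bound

/-- For `n ≥ 3`, `k ≥ 1` and `t ≥ r ≥ 1`, every `(t,r)`-broadcasting set of `C_n^{(k)}` has
size at least `⌈n / ((2t-r-1)k + 1)⌉`; hence `γ_{t,r}(C_n^{(k)}) ≥ ⌈n / ((2t-r-1)k + 1)⌉`. -/
theorem gammaCyclePow_lower_bound (n k t r : ℕ) (hn : 3 ≤ n) (hk : 1 ≤ k) (hr : 1 ≤ r)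
    (htr : r ≤ t) :
    (∀ T : Finset (Fin n), IsCycleBroadcasting n k t r T →
      (n + (2 * t - r - 1) * k) / ((2 * t - r - 1) * k + 1) ≤ T.card) ∧
    (n + (2 * t - r - 1) * k) / ((2 * t - r - 1) * k + 1) ≤ gammaCyclePow n k t r := by
  have : NeZero n := ⟨by omega⟩
  have hbound (T : Finset (Fin n)) (hT : IsCycleBroadcasting n k t r T) :
      (n + (2 * t - r - 1) * k) / ((2 * t - r - 1) * k + 1) ≤ T.card := by
    rw [Nat.div_le_iff_le_mul_add_pred (Nat.add_one_pos _), Nat.add_sub_cancel]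
    linarith [hT.le_card_mul hk hr htr]
  refine ⟨hbound, le_csInf ⟨_, univ, isCycleBroadcasting_univ htr, rfl⟩ ?_⟩
  rintro m ⟨T, hT, rfl⟩
  exact hbound T hT
end
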